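/- arXiv:1606.04230 — 8 statements merged into one kernel-verified Lean document; each statement's English description precedes it below -/
import Mathlib

section
/- Let a, b ≥ 0 be real numbers. There exists a differentiable function x : [0,1] → ℝ satisfying the Riccati equation x'(t) + a² x(t)² = −b² for all t ∈ [0,1] if and only if a·b < π. -/
open Real Set

/-
Substituting `x = (b / a) tan θ` linearizes the equation: `θ' = -a b`. So a solution on an
interval of length `L` forces `arctan (a x / b)` to drop by `a b L`, which is less than `π` because
`arctan` takes values in `(-π/2, π/2)`. Conversely, when `a b L < π`, the phase
`θ(t) = a b (c - t)` centred at the midpoint `c` stays in `(-π/2, π/2)`, where `tan` is smooth.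
-/

theorem hasDerivWithinAt_arctan_riccati_phase {a b : ℝ} (hb : b ≠ 0) {x : ℝ → ℝ} {s : Set ℝ}
    {t : ℝ} (hx : HasDerivWithinAt x (-(b ^ 2) - a ^ 2 * x t ^ 2) s t) :
    HasDerivWithinAt (fun t => arctan (a * x t / b) + a * b * t) 0 s t := by
  have hatan := (hasDerivAt_arctan (a * x t / b)).comp_hasDerivWithinAt t
    ((hx.const_mul a).div_const b)
  refine (hatan.add ((hasDerivWithinAt_id t s).const_mul (a * b))).congr_deriv ?_
  have hpos : 0 < 1 + (a * x t / b) ^ 2 := by positivity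
  field_simp
  ring

theorem mul_mul_sub_lt_pi_of_riccati {a b t₀ t₁ : ℝ} (h : t₀ ≤ t₁) {x : ℝ → ℝ}
    (hx : ∀ t ∈ Icc t₀ t₁, HasDerivWithinAt x (-(b ^ 2) - a ^ 2 * x t ^ 2) (Icc t₀ t₁) t) :
    a * b * (t₁ - t₀) < π := by
  rcases eq_or_ne b 0 with rfl | hb
  · simpa using pi_pos
  have hconst := (convex_Icc t₀ t₁).norm_image_sub_le_of_norm_hasDerivWithin_le
    (C := 0) (fun t ht => hasDerivWithinAt_arctan_riccati_phase hb (hx t ht))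
    (fun _ _ => by simp) (left_mem_Icc.2 h) (right_mem_Icc.2 h)
  rw [zero_mul, norm_le_zero_iff, sub_eq_zero] at hconst
  linarith [arctan_lt_pi_div_two (a * x t₀ / b), neg_pi_div_two_lt_arctan (a * x t₁ / b)]

theorem hasDerivAt_riccati_tan {a : ℝ} (ha : a ≠ 0) (b c t : ℝ)
    (hcos : cos (a * b * (c - t)) ≠ 0) :
    HasDerivAt (fun s => b / a * tan (a * b * (c - s)))
      (-(b ^ 2) - a ^ 2 * (b / a * tan (a * b * (c - t))) ^ 2) t := by
  have hphase : HasDerivAt (fun s => a * b * (c - s)) (-(a * b)) t := by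
    simpa using ((hasDerivAt_id t).const_sub c).const_mul (a * b)
  refine (((hasDerivAt_tan hcos).comp t hphase).const_mul (b / a)).congr_deriv ?_
  rw [← inv_one_add_tan_sq hcos]
  have hpos : 0 < 1 + tan (a * b * (c - t)) ^ 2 := by positivity
  field_simp
  ring

theorem exists_riccati_of_mul_mul_sub_lt_pi {a b t₀ t₁ : ℝ} (hab : 0 ≤ a * b)
    (h : a * b * (t₁ - t₀) < π) :
    ∃ x : ℝ → ℝ, ∀ t ∈ Icc t₀ t₁, HasDerivAt x (-(b ^ 2) - a ^ 2 * x t ^ 2) t := by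
  rcases eq_or_ne a 0 with rfl | ha
  · exact ⟨fun t => -(b ^ 2) * t, fun t _ => by simpa using (hasDerivAt_id t).const_mul (-(b ^ 2))⟩
  refine ⟨fun s => b / a * tan (a * b * ((t₀ + t₁) / 2 - s)), fun t ⟨ht₀, ht₁⟩ => ?_⟩
  have hphase : a * b * ((t₀ + t₁) / 2 - t) ∈ Ioo (-(π / 2)) (π / 2) :=
    ⟨by nlinarith, by nlinarith⟩
  exact hasDerivAt_riccati_tan ha b _ t (cos_pos_of_mem_Ioo hphase).ne'

/-- for `a, b ≥ 0`, there is a differentiable function `x` on `[0,1]` solving the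
Riccati equation `x' + a² x² = -b²` on `[0,1]` if and only if `a·b < π`. -/
theorem stmt_2 (a b : ℝ) (ha : 0 ≤ a) (hb : 0 ≤ b) :
    (∃ x : ℝ → ℝ, ∀ t ∈ Icc (0:ℝ) 1,
      HasDerivWithinAt x (-(b ^ 2) - a ^ 2 * (x t) ^ 2) (Icc (0:ℝ) 1) t) ↔ a * b < Real.pi := by
  constructor
  · rintro ⟨x, hx⟩
    simpa using mul_mul_sub_lt_pi_of_riccati zero_le_one hx
  · intro hab
    obtain ⟨x, hx⟩ := exists_riccati_of_mul_mul_sub_lt_pi (t₀ := 0) (t₁ := 1) (mul_nonneg ha hb)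
      (by simpa using hab)
    exact ⟨x, fun t ht => (hx t ht).hasDerivWithinAt⟩
end

section
/- Let T > 0, let m, M : [0,T] → ℝ be integrable functions with m(t) ≤ M(t) for almost every t, and let η₁, η₂ : [0,T] → ℝ be continuous functions with 0 < η₁(t) ≤ η₂(t) for all t ∈ [0,T]. Suppose g, f : [0,T] → ℝ are absolutely continuous and satisfy g'(t) + g(t)²/η₁(t) = m(t) and f'(t) + f(t)²/η₂(t) = M(t) for almost every t ∈ [0,T], with g(0) ≤ f(0). Then f(t) ≥ g(t) for every t ∈ [0,T]; moreover f(t) ≤ f(0) + ∫₀ᵗ M(s) ds for every t ∈ [0,T]. -/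
open Set MeasureTheory intervalIntegral

/-!
Write `w = f - g`. Subtracting the two equations and using `m ≤ M`, `η₁ ≤ η₂` gives
`w' ≥ -c w` a.e. with `c = (f + g) / η₁` continuous, hence bounded by some `K`, so `w' ≥ K w`
wherever `w < 0`. If `w` became negative, take the last time `t₀` with `w t₀ ≥ 0` and the
minimum `w y < 0` of `w` on a window `[t₀, t₀ + δ]` with `K δ < 1`: integrating gives
`w y - w t₀ ≥ K δ w y > w y`, contradicting `w t₀ ≥ 0`.
The bound on `f` is `f' ≤ M` integrated.
-/

theorem exists_nonneg_forall_Ioc_neg {w : ℝ → ℝ} {a t : ℝ} (hat : a ≤ t)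
    (hw : ContinuousOn w (Icc a t)) (ha : 0 ≤ w a) (ht : w t < 0) :
    ∃ t₀ ∈ Ico a t, 0 ≤ w t₀ ∧ ∀ s ∈ Ioc t₀ t, w s < 0 := by
  have hclosed : IsClosed (Icc a t ∩ w ⁻¹' Ici 0) :=
    hw.preimage_isClosed_of_isClosed isClosed_Icc isClosed_Ici
  obtain ⟨t₀, ⟨ht₀, hwt₀⟩, hlast⟩ :=
    (isCompact_Icc.of_isClosed_subset hclosed inter_subset_left).exists_isGreatest
      ⟨a, left_mem_Icc.2 hat, ha⟩
  refine ⟨t₀, ⟨ht₀.1, ht₀.2.lt_of_ne ?_⟩, hwt₀, fun s hs => ?_⟩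
  · rintro rfl
    exact (not_le.2 ht) hwt₀
  · by_contra! hws
    exact (hlast ⟨⟨ht₀.1.trans hs.1.le, hs.2⟩, hws⟩).not_gt hs.1

section AbsolutelyContinuous

variable {w w' : ℝ → ℝ} {a b : ℝ}

theorem continuousOn_of_eq_add_integral (hw' : IntegrableOn w' (Icc a b))
    (hw : ∀ t ∈ Icc a b, w t = w a + ∫ s in a..t, w' s) : ContinuousOn w (Icc a b) := by
  rcases le_or_gt a b with hab | hba
  · rw [← uIcc_of_le hab] at hw' hw ⊢
    exact (continuousOn_const.add (continuousOn_primitive_interval hw')).congr hw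
  · rw [Icc_eq_empty_of_lt hba]
    exact continuousOn_empty w

theorem sub_eq_integral_of_eq_add_integral (hw' : IntegrableOn w' (Icc a b))
    (hw : ∀ t ∈ Icc a b, w t = w a + ∫ s in a..t, w' s) {s t : ℝ} (hs : s ∈ Icc a b)
    (ht : t ∈ Icc a b) : w t - w s = ∫ r in s..t, w' r := by
  have ha : a ∈ Icc a b := left_mem_Icc.2 (hs.1.trans hs.2)
  rw [hw t ht, hw s hs, ← integral_interval_sub_left
    (hw'.mono_set (uIcc_subset_Icc ha ht)).intervalIntegrable
    (hw'.mono_set (uIcc_subset_Icc ha hs)).intervalIntegrable]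
  ring

theorem le_add_integral_of_ae_le {v : ℝ → ℝ} (hw' : IntegrableOn w' (Icc a b))
    (hv : IntegrableOn v (Icc a b)) (hw : ∀ t ∈ Icc a b, w t = w a + ∫ s in a..t, w' s)
    (hw'v : ∀ᵐ s ∂volume.restrict (Icc a b), w' s ≤ v s) {t : ℝ} (ht : t ∈ Icc a b) :
    w t ≤ w a + ∫ s in a..t, v s := by
  have hsub : uIcc a t ⊆ Icc a b := uIcc_subset_Icc (left_mem_Icc.2 (ht.1.trans ht.2)) ht
  rw [hw t ht]
  gcongr
  refine integral_mono_ae_restrict ht.1 (hw'.mono_set hsub).intervalIntegrable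
    (hv.mono_set hsub).intervalIntegrable (ae_restrict_of_ae_restrict_of_subset ?_ hw'v)
  exact Icc_subset_Icc le_rfl ht.2

theorem sub_eq_add_integral_sub {v v' : ℝ → ℝ} (hw' : IntegrableOn w' (Icc a b))
    (hv' : IntegrableOn v' (Icc a b)) (hw : ∀ t ∈ Icc a b, w t = w a + ∫ s in a..t, w' s)
    (hv : ∀ t ∈ Icc a b, v t = v a + ∫ s in a..t, v' s) :
    ∀ t ∈ Icc a b, (w - v) t = (w - v) a + ∫ s in a..t, (w' - v') s := by
  intro t ht
  have hsub : uIcc a t ⊆ Icc a b := uIcc_subset_Icc (left_mem_Icc.2 (ht.1.trans ht.2)) ht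
  rw [Pi.sub_apply, Pi.sub_apply, hw t ht, hv t ht, Pi.sub_def,
    integral_sub (hw'.mono_set hsub).intervalIntegrable (hv'.mono_set hsub).intervalIntegrable]
  ring

theorem nonneg_of_eq_add_integral_of_ae_mul_le {K : ℝ} (hK : 0 ≤ K)
    (hw' : IntegrableOn w' (Icc a b)) (hw : ∀ t ∈ Icc a b, w t = w a + ∫ s in a..t, w' s)
    (hw'K : ∀ᵐ s ∂volume.restrict (Icc a b), w s < 0 → K * w s ≤ w' s) (ha : 0 ≤ w a) :
    ∀ t ∈ Icc a b, 0 ≤ w t := by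
  intro t₁ ht₁
  by_contra! hwt₁
  have hwc := continuousOn_of_eq_add_integral hw' hw
  obtain ⟨t₀, ht₀, hwt₀, hneg⟩ := exists_nonneg_forall_Ioc_neg ht₁.1
    (hwc.mono (Icc_subset_Icc le_rfl ht₁.2)) ha hwt₁
  have hδ : 0 < 1 / (K + 1) := by positivity
  set t₂ := min t₁ (t₀ + 1 / (K + 1))
  have ht₀₂ : t₀ < t₂ := lt_min ht₀.2 (by linarith)
  have ht₂₁ : t₂ ≤ t₁ := min_le_left _ _
  have hsub : Icc t₀ t₂ ⊆ Icc a b := Icc_subset_Icc ht₀.1 (ht₂₁.trans ht₁.2)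
  obtain ⟨y, hy, hymin⟩ :=
    isCompact_Icc.exists_isMinOn (nonempty_Icc.2 ht₀₂.le) (hwc.mono hsub)
  have hwy : w y < 0 := (hymin (right_mem_Icc.2 ht₀₂.le)).trans_lt (hneg t₂ ⟨ht₀₂, ht₂₁⟩)
  have hKy : K * (y - t₀) < 1 := by
    calc K * (y - t₀) ≤ K * (1 / (K + 1)) := by
          gcongr
          linarith [hy.2, min_le_right t₁ (t₀ + 1 / (K + 1))]
      _ < 1 := by rw [mul_one_div, div_lt_one (by linarith)]; linarith
  have hint : (y - t₀) * (K * w y) ≤ w y - w t₀ := by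
    have hIoc : Ioc t₀ y ⊆ Icc a b :=
      Ioc_subset_Icc_self.trans ((Icc_subset_Icc le_rfl hy.2).trans hsub)
    rw [sub_eq_integral_of_eq_add_integral hw' hw (hsub (left_mem_Icc.2 ht₀₂.le)) (hsub hy),
      ← smul_eq_mul, ← intervalIntegral.integral_const, integral_of_le hy.1,
      integral_of_le hy.1]
    refine setIntegral_mono_ae_restrict (integrableOn_const measure_Ioc_lt_top.ne)
      (hw'.mono_set hIoc) ?_
    filter_upwards [ae_restrict_of_ae_restrict_of_subset hIoc hw'K,
      ae_restrict_mem measurableSet_Ioc] with s hs hsIoc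
    have hys : w y ≤ w s := hymin ⟨hsIoc.1.le, hsIoc.2.trans hy.2⟩
    calc K * w y ≤ K * w s := by gcongr
      _ ≤ w' s := hs (hneg s ⟨hsIoc.1, hsIoc.2.trans (hy.2.trans ht₂₁)⟩)
  linarith [mul_neg_of_pos_of_neg (sub_pos.2 hKy) hwy]

end AbsolutelyContinuous

theorem neg_mul_sub_le_of_riccati {η₁ η₂ m M g f g' f' : ℝ} (hη₁ : 0 < η₁) (hη : η₁ ≤ η₂)
    (hmM : m ≤ M) (hg : g' + g ^ 2 / η₁ = m) (hf : f' + f ^ 2 / η₂ = M) :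
    -((f + g) / η₁) * (f - g) ≤ f' - g' := by
  have hdiv : f ^ 2 / η₂ ≤ f ^ 2 / η₁ := by gcongr
  have hfactor : -((f + g) / η₁) * (f - g) = g ^ 2 / η₁ - f ^ 2 / η₁ := by
    field_simp
    ring
  linarith

theorem stmt_3_general (T : ℝ) (m M η₁ η₂ g f g' f' : ℝ → ℝ)
    (hM : IntegrableOn M (Icc 0 T))
    (hmM : ∀ᵐ t ∂(volume.restrict (Icc 0 T)), m t ≤ M t)
    (hη₁ : ContinuousOn η₁ (Icc 0 T))
    (hη₁pos : ∀ t ∈ Icc 0 T, 0 < η₁ t) (hηle : ∀ t ∈ Icc 0 T, η₁ t ≤ η₂ t)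
    (hg' : IntegrableOn g' (Icc 0 T)) (hf' : IntegrableOn f' (Icc 0 T))
    (hgAC : ∀ t ∈ Icc 0 T, g t = g 0 + ∫ s in (0:ℝ)..t, g' s)
    (hfAC : ∀ t ∈ Icc 0 T, f t = f 0 + ∫ s in (0:ℝ)..t, f' s)
    (hgeq : ∀ᵐ t ∂(volume.restrict (Icc 0 T)), g' t + (g t) ^ 2 / η₁ t = m t)
    (hfeq : ∀ᵐ t ∂(volume.restrict (Icc 0 T)), f' t + (f t) ^ 2 / η₂ t = M t)
    (h0 : g 0 ≤ f 0) :
    ∀ t ∈ Icc 0 T, g t ≤ f t ∧ f t ≤ f 0 + ∫ s in (0:ℝ)..t, M s := by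
  intro t ht
  obtain ⟨K, hK⟩ := isCompact_Icc.exists_bound_of_continuousOn
    (((continuousOn_of_eq_add_integral hf' hfAC).add
      (continuousOn_of_eq_add_integral hg' hgAC)).div hη₁ fun s hs => (hη₁pos s hs).ne')
  have hw'K : ∀ᵐ s ∂volume.restrict (Icc 0 T),
      (f - g) s < 0 → K * (f - g) s ≤ (f' - g') s := by
    filter_upwards [hgeq, hfeq, hmM, ae_restrict_mem measurableSet_Icc]
      with s hgs hfs hmMs hs hws
    have hcomp := neg_mul_sub_le_of_riccati (hη₁pos s hs) (hηle s hs) hmMs hgs hfs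
    have hKs := abs_le.1 (Real.norm_eq_abs _ ▸ hK s hs)
    simp only [Pi.sub_apply, Pi.div_apply, Pi.add_apply] at hws hKs ⊢
    nlinarith [mul_nonneg (neg_le_iff_add_nonneg.1 hKs.1) (neg_nonneg.2 hws.le)]
  have hf'M : ∀ᵐ s ∂volume.restrict (Icc 0 T), f' s ≤ M s := by
    filter_upwards [hfeq, ae_restrict_mem measurableSet_Icc] with s hfs hs
    have hsq := div_nonneg (sq_nonneg (f s)) ((hη₁pos s hs).trans_le (hηle s hs)).le
    linarith
  refine ⟨?_, le_add_integral_of_ae_le hf' hM hfAC hf'M ht⟩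
  exact sub_nonneg.1 <| nonneg_of_eq_add_integral_of_ae_mul_le
    ((norm_nonneg _).trans (hK t ht)) (hf'.sub hg') (sub_eq_add_integral_sub hf' hg' hfAC hgAC)
    hw'K (sub_nonneg.2 h0) t ht

/-- Sturm comparison lemma for the Riccati equations `g' + g²/η₁ = m` and
`f' + f²/η₂ = M` with `m ≤ M` a.e., `0 < η₁ ≤ η₂`, for absolutely continuous solutions
(encoded as being the integral of their a.e. derivative) with `g 0 ≤ f 0`: then `g ≤ f` on
`[0,T]` and `f t ≤ f 0 + ∫₀ᵗ M`. -/
theorem stmt_3 (T : ℝ) (hT : 0 < T) (m M η₁ η₂ g f g' f' : ℝ → ℝ)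
    (hm : IntegrableOn m (Icc 0 T)) (hM : IntegrableOn M (Icc 0 T))
    (hmM : ∀ᵐ t ∂(volume.restrict (Icc 0 T)), m t ≤ M t)
    (hη₁ : ContinuousOn η₁ (Icc 0 T)) (hη₂ : ContinuousOn η₂ (Icc 0 T))
    (hη₁pos : ∀ t ∈ Icc 0 T, 0 < η₁ t) (hηle : ∀ t ∈ Icc 0 T, η₁ t ≤ η₂ t)
    (hg' : IntegrableOn g' (Icc 0 T)) (hf' : IntegrableOn f' (Icc 0 T))
    (hgAC : ∀ t ∈ Icc 0 T, g t = g 0 + ∫ s in (0:ℝ)..t, g' s)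
    (hfAC : ∀ t ∈ Icc 0 T, f t = f 0 + ∫ s in (0:ℝ)..t, f' s)
    (hgeq : ∀ᵐ t ∂(volume.restrict (Icc 0 T)), g' t + (g t) ^ 2 / η₁ t = m t)
    (hfeq : ∀ᵐ t ∂(volume.restrict (Icc 0 T)), f' t + (f t) ^ 2 / η₂ t = M t)
    (h0 : g 0 ≤ f 0) :
    ∀ t ∈ Icc 0 T, g t ≤ f t ∧ f t ≤ f 0 + ∫ s in (0:ℝ)..t, M s :=
  stmt_3_general T m M η₁ η₂ g f g' f' hM hmM hη₁ hη₁pos hηle hg' hf' hgAC hfAC hgeq hfeq h0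
end

section
/- Let η : [0,1] → ℝ be continuous with η(t) > 0 for all t, and let m : [0,1] → ℝ be a bounded measurable function; write [m(t)]₋ = max(−m(t), 0) for the negative part of m. (i) If sup_{t∈[0,1]} [m(t)]₋ / inf_{t∈[0,1]} η(t) < π², then there exists an absolutely continuous function g : [0,1] → ℝ satisfying g'(t) + g(t)²/η(t) = m(t) for almost every t ∈ [0,1]. (ii) If there is a constant c ≥ 0 with m(t) ≤ −c for almost every t and c / sup_{t∈[0,1]} η(t) ≥ π², then no absolutely continuous function g : [0,1] → ℝ satisfies g'(t) + g(t)²/η(t) = m(t) almost everywhere on [0,1]. -/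
open Set MeasureTheory intervalIntegral

/-!
Both parts compare `g` with the explicit solutions `t ↦ S k tan (θ - k t)` of the autonomous
equation `v' + v² / S = -S k²`, which run from `+∞` to `-∞` in time `π / k`. Comparison holds
for sub- and supersolutions in integral form: their difference `φ` satisfies `φ' ≤ K |φ|`, and
Gronwall's inequality applies to `max φ 0`.

(i) With `s = inf η` and `sup [m]₋ < s k² < s π²`, the function `s k tan (k (1/2 - t))` is
defined on all of `[0, 1]` and is a subsolution. With `g²` truncated at a level `M` the equation
is globally Lipschitz in `g`, and since its right-hand side is only measurable in `t` it is solved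
by Picard iteration in `C([0, 1])`. Started at the subsolution's initial value, the solution stays
between the subsolution and `g 0 + t sup m`, hence in `[-M, M]`, where the truncation is inactive.

(ii) With `S = sup η` and `c = S k²`, `k ≥ π`, a solution `g` is a subsolution of
`v' + v² / S = -c`, so it lies below the solution `S k tan (θ - k t)` with the same initial value,
which tends to `-∞` before `t = 1`; but `g` is bounded.
-/

/-- An absolutely continuous solution `g` of the Riccati equation `g' + g²/η = m` a.e. on
`[0,1]`, encoded as: `g` is the integral of an integrable a.e. derivative `g'` and the equation
holds almost everywhere on `[0,1]`. -/
def HasACRiccatiSol (η m : ℝ → ℝ) : Prop :=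
  ∃ g g' : ℝ → ℝ, IntegrableOn g' (Icc (0:ℝ) 1) ∧
    (∀ t ∈ Icc (0:ℝ) 1, g t = g 0 + ∫ s in (0:ℝ)..t, g' s) ∧
    (∀ᵐ t ∂(volume.restrict (Icc (0:ℝ) 1)), g' t + (g t) ^ 2 / η t = m t)

open Real
open scoped NNReal Nat

theorem eq_zero_of_le_mul_integral {ψ : ℝ → ℝ} {a b K : ℝ} (hK : 0 ≤ K)
    (hψ : ContinuousOn ψ (Icc a b)) (hψ0 : ∀ t ∈ Icc a b, 0 ≤ ψ t)
    (hle : ∀ t ∈ Icc a b, ψ t ≤ K * ∫ u in a..t, ψ u) : ∀ t ∈ Icc a b, ψ t = 0 := by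
  intro t ht
  have hab : a ≤ b := ht.1.trans ht.2
  set Ψ := IccExtend hab (domRestrict (Icc a b) ψ)
  have hΨ : Continuous Ψ := continuous_IccExtend_iff.2 hψ.domRestrict
  have hΨψ : EqOn Ψ ψ (Icc a b) := fun u hu => IccExtend_of_mem hab _ hu
  have hint : ∀ x ∈ Icc a b, ∫ u in a..x, ψ u = ∫ u in a..x, Ψ u := fun x hx =>
    integral_congr fun u hu => (hΨψ (uIcc_subset_Icc (left_mem_Icc.2 hab) hx hu)).symm
  have hW : ∀ x ∈ Icc a b, ∫ u in a..x, Ψ u = 0 :=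
    eq_zero_of_abs_deriv_le_mul_abs_self_of_eq_zero_right
      (fun x _ => (hΨ.integral_hasStrictDerivAt a x).hasDerivAt.continuousAt.continuousWithinAt)
      (fun x _ => (hΨ.integral_hasStrictDerivAt a x).hasDerivAt.hasDerivWithinAt)
      integral_same fun x hx => by
        have hx' := Ico_subset_Icc_self hx
        rw [Real.norm_eq_abs, Real.norm_eq_abs, hΨψ hx', abs_of_nonneg (hψ0 x hx'), ← hint x hx']
        exact (hle x hx').trans (mul_le_mul_of_nonneg_left (le_abs_self _) hK)
  exact le_antisymm (by simpa [hint t ht, hW t ht] using hle t ht) (hψ0 t ht)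

def IsPrimitiveOn (f f' : ℝ → ℝ) (a b : ℝ) : Prop :=
  IntegrableOn f' (Icc a b) ∧ ∀ t ∈ Icc a b, f t = f a + ∫ u in a..t, f' u

namespace IsPrimitiveOn

variable {f f' g g' : ℝ → ℝ} {a b : ℝ}

theorem intervalIntegrable (hf : IsPrimitiveOn f f' a b) {τ t : ℝ} (hτ : τ ∈ Icc a b)
    (ht : t ∈ Icc a b) : IntervalIntegrable f' volume τ t :=
  (hf.1.mono_set (uIcc_subset_Icc hτ ht)).intervalIntegrable

theorem sub_eq_integral (hf : IsPrimitiveOn f f' a b) {τ t : ℝ} (hτ : τ ∈ Icc a b)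
    (ht : t ∈ Icc a b) : f t - f τ = ∫ u in τ..t, f' u := by
  have ha : a ∈ Icc a b := left_mem_Icc.2 (hτ.1.trans hτ.2)
  rw [hf.2 t ht, hf.2 τ hτ, ← integral_interval_sub_left (hf.intervalIntegrable ha ht)
    (hf.intervalIntegrable ha hτ)]
  ring

theorem continuousOn (hf : IsPrimitiveOn f f' a b) : ContinuousOn f (Icc a b) := by
  rcases le_or_gt a b with hab | hba
  · have := continuousOn_primitive_interval (μ := volume) (a := a) (b := b) (f := f')
      (by rw [uIcc_of_le hab]; exact hf.1)
    rw [uIcc_of_le hab] at this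
    exact (continuousOn_const.add this).congr hf.2
  · simp [Icc_eq_empty_of_lt hba]

theorem exists_abs_le (hf : IsPrimitiveOn f f' a b) : ∃ R, ∀ t ∈ Icc a b, |f t| ≤ R :=
  isCompact_Icc.exists_bound_of_continuousOn hf.continuousOn

theorem sub (hf : IsPrimitiveOn f f' a b) (hg : IsPrimitiveOn g g' a b) :
    IsPrimitiveOn (f - g) (f' - g') a b := by
  refine ⟨hf.1.sub hg.1, fun t ht => ?_⟩
  have ha : a ∈ Icc a b := left_mem_Icc.2 (ht.1.trans ht.2)
  simp only [Pi.sub_apply]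
  rw [integral_sub (hf.intervalIntegrable ha ht) (hg.intervalIntegrable ha ht),
    ← hf.sub_eq_integral ha ht, ← hg.sub_eq_integral ha ht]
  ring

theorem mono_right (hf : IsPrimitiveOn f f' a b) {c : ℝ} (hc : c ≤ b) : IsPrimitiveOn f f' a c :=
  ⟨hf.1.mono_set (Icc_subset_Icc_right hc), fun t ht => hf.2 t ⟨ht.1, ht.2.trans hc⟩⟩

theorem nonpos_of_le_mul_abs {K : ℝ} (hf : IsPrimitiveOn f f' a b) (hK : 0 ≤ K) (ha : f a ≤ 0)
    (hf' : ∀ᵐ u ∂(volume.restrict (Icc a b)), f' u ≤ K * |f u|) : ∀ t ∈ Icc a b, f t ≤ 0 := by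
  have hfc := hf.continuousOn
  have hfpos : ContinuousOn (fun u => max (f u) 0) (Icc a b) := hfc.sup continuousOn_const
  suffices key : ∀ t ∈ Icc a b, max (f t) 0 ≤ K * ∫ u in a..t, max (f u) 0 by
    intro t ht
    have := eq_zero_of_le_mul_integral hK hfpos
      (fun u _ => le_max_right _ _) key t ht
    exact (le_max_left _ _).trans this.le
  intro t ht
  have hIat : Icc a t ⊆ Icc a b := Icc_subset_Icc_right ht.2
  have hint0 : 0 ≤ ∫ u in a..t, max (f u) 0 :=
    integral_nonneg ht.1 fun u _ => le_max_right _ _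
  rcases le_or_gt (f t) 0 with hft | hft
  · rw [max_eq_right hft]
    exact mul_nonneg hK hint0
  -- `τ` is the last point of `[a, t]` where `f ≤ 0`; on `[τ, t]` one has `f ≥ 0`.
  set Z := {u ∈ Icc a t | f u ≤ 0}
  have hZ : IsClosed Z := (hfc.mono hIat).preimage_isClosed_of_isClosed isClosed_Icc isClosed_Iic
  have hZbdd : BddAbove Z := ⟨t, fun u hu => hu.1.2⟩
  have hτ : sSup Z ∈ Z := hZ.csSup_mem ⟨a, left_mem_Icc.2 ht.1, ha⟩ hZbdd
  set τ := sSup Z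
  have hIτt : Icc τ t ⊆ Icc a b := (Icc_subset_Icc_left hτ.1.1).trans hIat
  have hnonneg : ∀ u ∈ Icc τ t, 0 ≤ f u := by
    intro u hu
    by_contra! hu0
    obtain ⟨z, hz, hz0⟩ := intermediate_value_Icc hu.2
      (hfc.mono ((Icc_subset_Icc_left hu.1).trans hIτt)) ⟨hu0.le, hft.le⟩
    have : z ≤ τ := le_csSup hZbdd ⟨⟨hτ.1.1.trans (hu.1.trans hz.1), hz.2⟩, hz0.le⟩
    have hzu : z = u := le_antisymm (this.trans hu.1) hz.1
    exact hu0.ne (hzu ▸ hz0)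
  have hτt : τ ≤ t := hτ.1.2
  have hintτ : IntervalIntegrable (fun u => K * max (f u) 0) volume τ t :=
    (hfpos.mono hIτt).intervalIntegrable_of_Icc hτt |>.const_mul K
  calc max (f t) 0 = f t := max_eq_left hft.le
    _ ≤ f t - f τ := by linarith [hτ.2]
    _ = ∫ u in τ..t, f' u := hf.sub_eq_integral (hIτt (left_mem_Icc.2 hτt)) ht
    _ ≤ ∫ u in τ..t, K * max (f u) 0 := by
        refine integral_mono_ae_restrict hτt (hf.intervalIntegrable (hIτt (left_mem_Icc.2 hτt)) ht)
          hintτ ?_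
        filter_upwards [ae_restrict_of_ae_restrict_of_subset hIτt hf',
          ae_restrict_mem measurableSet_Icc] with u hu hmem
        rwa [max_eq_left (hnonneg u hmem), ← abs_of_nonneg (hnonneg u hmem)]
    _ ≤ ∫ u in a..t, K * max (f u) 0 := by
        refine integral_mono_interval hτ.1.1 hτt le_rfl ?_ ?_
        · exact ae_of_all _ fun u => mul_nonneg hK (le_max_right _ _)
        · exact (hfpos.mono hIat).intervalIntegrable_of_Icc ht.1 |>.const_mul K
    _ = K * ∫ u in a..t, max (f u) 0 := integral_const_mul K _

theorem le_of_sub_le_mul_abs {K : ℝ} (hf : IsPrimitiveOn f f' a b) (hg : IsPrimitiveOn g g' a b)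
    (hK : 0 ≤ K) (ha : f a ≤ g a)
    (hfg : ∀ᵐ u ∂(volume.restrict (Icc a b)), f' u - g' u ≤ K * |f u - g u|) :
    ∀ t ∈ Icc a b, f t ≤ g t := fun t ht =>
  sub_nonpos.1 ((hf.sub hg).nonpos_of_le_mul_abs hK (sub_nonpos.2 ha) hfg t ht)

end IsPrimitiveOn

theorem isPrimitiveOn_of_hasDerivAt {f f' : ℝ → ℝ} {a b : ℝ}
    (hf : ∀ t ∈ Icc a b, HasDerivAt f (f' t) t) (hf' : ContinuousOn f' (Icc a b)) :
    IsPrimitiveOn f f' a b := by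
  refine ⟨hf'.integrableOn_Icc, fun t ht => ?_⟩
  rw [integral_eq_sub_of_hasDerivAt (fun u hu => hf u ?_)
    (hf'.mono (uIcc_subset_Icc (left_mem_Icc.2 (ht.1.trans ht.2)) ht)).intervalIntegrable]
  · ring
  · exact uIcc_subset_Icc (left_mem_Icc.2 (ht.1.trans ht.2)) ht hu

section Picard

variable {a b : ℝ}

noncomputable def picardMap (hab : a ≤ b) (x₀ : ℝ) (F : ℝ → ℝ → ℝ)
    (hF : ∀ g : ℝ → ℝ, Continuous g → IntegrableOn (fun u => F u (g u)) (Icc a b))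
    (G : C(Icc a b, ℝ)) : C(Icc a b, ℝ) where
  toFun t := x₀ + ∫ u in a..t, F u (IccExtend hab G u)
  continuous_toFun := by
    have h := continuousOn_primitive_interval (μ := volume) (a := a) (b := b)
      (f := fun u => F u (IccExtend hab G u))
      (by rw [uIcc_of_le hab]; exact hF _ (continuous_IccExtend_iff.2 G.continuous))
    rw [uIcc_of_le hab] at h
    exact continuous_const.add h.domRestrict

variable {F : ℝ → ℝ → ℝ} {hab : a ≤ b} {x₀ : ℝ}
  {hF : ∀ g : ℝ → ℝ, Continuous g → IntegrableOn (fun u => F u (g u)) (Icc a b)}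

theorem picardMap_apply (G : C(Icc a b, ℝ)) (t : Icc a b) :
    picardMap hab x₀ F hF G t = x₀ + ∫ u in a..t, F u (IccExtend hab G u) :=
  rfl

theorem abs_picardMap_iterate_sub_le {L : ℝ≥0} (hL : ∀ u ∈ Icc a b, LipschitzWith L (F u))
    (G H : C(Icc a b, ℝ)) (n : ℕ) (t : Icc a b) :
    |(picardMap hab x₀ F hF)^[n] G t - (picardMap hab x₀ F hF)^[n] H t| ≤
      L ^ n * (t - a) ^ n / n ! * dist G H := by
  induction n generalizing t with
  | zero => simpa [← Real.dist_eq] using ContinuousMap.dist_apply_le_dist (f := G) (g := H) t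
  | succ n ih =>
    set T := picardMap hab x₀ F hF
    set Gn := IccExtend hab (T^[n] G)
    set Hn := IccExtend hab (T^[n] H)
    have ha : a ∈ Icc a b := left_mem_Icc.2 hab
    have hint : ∀ K : C(Icc a b, ℝ),
        IntervalIntegrable (fun u => F u (IccExtend hab K u)) volume a t := fun K =>
      ((hF _ (continuous_IccExtend_iff.2 K.continuous)).mono_set
        (uIcc_subset_Icc ha t.2)).intervalIntegrable
    have hstep : ∀ u ∈ Icc a (t : ℝ), |F u (Gn u) - F u (Hn u)| ≤
        L ^ (n + 1) * (u - a) ^ n / n ! * dist G H := by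
      intro u hu
      have hub : u ∈ Icc a b := ⟨hu.1, hu.2.trans t.2.2⟩
      calc |F u (Gn u) - F u (Hn u)| ≤ L * |Gn u - Hn u| := by
            simpa [← Real.dist_eq] using (hL u hub).dist_le_mul (Gn u) (Hn u)
        _ ≤ L * (L ^ n * (u - a) ^ n / n ! * dist G H) := by
            simp only [Gn, Hn, IccExtend_of_mem hab _ hub]
            exact mul_le_mul_of_nonneg_left (ih ⟨u, hub⟩) L.2
        _ = L ^ (n + 1) * (u - a) ^ n / n ! * dist G H := by ring
    rw [Function.iterate_succ_apply', Function.iterate_succ_apply', picardMap_apply,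
      picardMap_apply, add_sub_add_left_eq_sub, ← integral_sub (hint _) (hint _)]
    calc |∫ u in a..t, (F u (Gn u) - F u (Hn u))|
        ≤ ∫ u in a..t, |F u (Gn u) - F u (Hn u)| := abs_integral_le_integral_abs t.2.1
      _ ≤ ∫ u in a..t, L ^ (n + 1) * (u - a) ^ n / n ! * dist G H :=
          integral_mono_on t.2.1 ((hint _).sub (hint _)).abs
            ((by fun_prop : Continuous _).intervalIntegrable _ _) hstep
      _ = L ^ (n + 1) / n ! * dist G H * ∫ u in a..t, (u - a) ^ n := by
          rw [← intervalIntegral.integral_const_mul]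
          congr 1 with u
          ring
      _ = L ^ (n + 1) * (t - a) ^ (n + 1) / (n + 1)! * dist G H := by
          rw [intervalIntegral.integral_comp_sub_right (fun x => x ^ n), integral_pow, sub_self,
            zero_pow n.succ_ne_zero, Nat.factorial_succ]
          push_cast
          field_simp
          ring

end Picard

theorem exists_isPrimitiveOn_of_lipschitzWith {a b : ℝ} {F : ℝ → ℝ → ℝ} {L : ℝ≥0} (hab : a ≤ b)
    (x₀ : ℝ) (hF : ∀ g : ℝ → ℝ, Continuous g → IntegrableOn (fun u => F u (g u)) (Icc a b))
    (hL : ∀ u ∈ Icc a b, LipschitzWith L (F u)) :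
    ∃ g : ℝ → ℝ, g a = x₀ ∧ IsPrimitiveOn g (fun u => F u (g u)) a b := by
  set T := picardMap hab x₀ F hF
  -- The `n`-th iterate of `T` is Lipschitz with constant `(L (b - a))ⁿ / n!`, eventually `< 1`.
  obtain ⟨N, hN⟩ : ∃ N : ℕ, (L * (b - a)) ^ N / N ! < 1 :=
    ((FloorSemiring.tendsto_pow_div_factorial_atTop _).eventually (gt_mem_nhds one_pos)).exists
  have hκ : 0 ≤ (L * (b - a)) ^ N / N ! := by have := sub_nonneg.2 hab; positivity
  have hcontr : ContractingWith ⟨_, hκ⟩ T^[N] := by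
    refine ⟨hN, LipschitzWith.of_dist_le_mul fun G H => ?_⟩
    refine (ContinuousMap.dist_le (by positivity)).2 fun t => ?_
    change _ ≤ (L * (b - a)) ^ N / N ! * dist G H
    rw [Real.dist_eq, mul_pow]
    refine (abs_picardMap_iterate_sub_le hL G H N t).trans ?_
    have : ((t : ℝ) - a) ^ N ≤ (b - a) ^ N := pow_le_pow_left₀ (sub_nonneg.2 t.2.1)
      (sub_le_sub_right t.2.2 a) N
    gcongr
  set G := hcontr.fixedPoint T^[N]
  have hG : T G = G := hcontr.isFixedPt_fixedPoint_iterate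
  have hGt : ∀ t ∈ Icc a b, IccExtend hab G t = x₀ + ∫ u in a..t, F u (IccExtend hab G u) :=
    fun t ht => by
      rw [IccExtend_of_mem hab _ ht]
      change G ⟨t, ht⟩ = T G ⟨t, ht⟩
      rw [hG]
  refine ⟨IccExtend hab G, by simpa using hGt a (left_mem_Icc.2 hab),
    hF _ (continuous_IccExtend_iff.2 G.continuous), fun t ht => ?_⟩
  rw [hGt t ht, hGt a (left_mem_Icc.2 hab), integral_same, add_zero]

theorem abs_sq_sub_sq_le {x y R : ℝ} (hx : |x| ≤ R) (hy : |y| ≤ R) :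
    |x ^ 2 - y ^ 2| ≤ 2 * R * |x - y| := by
  rw [sq_sub_sq, abs_mul]
  gcongr
  linarith [abs_add_le x y]

theorem hasDerivAt_mul_tan_sub_mul {S k θ t : ℝ} (hS : S ≠ 0) (hcos : cos (θ - k * t) ≠ 0) :
    HasDerivAt (fun t => S * k * tan (θ - k * t))
      (-(S * k ^ 2) - (S * k * tan (θ - k * t)) ^ 2 / S) t := by
  have h := ((hasDerivAt_tan hcos).comp t
    (((hasDerivAt_id t).const_mul k).const_sub θ)).const_mul (S * k)
  refine h.congr_deriv ?_
  rw [tan_eq_sin_div_cos]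
  field_simp
  linear_combination k ^ 2 * sin_sq_add_cos_sq (θ - k * t)

theorem isPrimitiveOn_mul_tan_sub_mul {S k θ a b : ℝ} (hS : S ≠ 0)
    (hθ : ∀ t ∈ Icc a b, θ - k * t ∈ Ioo (-(π / 2)) (π / 2)) :
    IsPrimitiveOn (fun t => S * k * tan (θ - k * t))
      (fun t => -(S * k ^ 2) - (S * k * tan (θ - k * t)) ^ 2 / S) a b := by
  have hderiv : ∀ t ∈ Icc a b, HasDerivAt (fun t => S * k * tan (θ - k * t))
      (-(S * k ^ 2) - (S * k * tan (θ - k * t)) ^ 2 / S) t :=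
    fun t ht => hasDerivAt_mul_tan_sub_mul hS (cos_pos_of_mem_Ioo (hθ t ht)).ne'
  have hcont : ContinuousOn (fun t => S * k * tan (θ - k * t)) (Icc a b) :=
    fun t ht => (hderiv t ht).continuousAt.continuousWithinAt
  exact isPrimitiveOn_of_hasDerivAt hderiv (continuousOn_const.sub ((hcont.pow 2).div_const S))

theorem exists_riccati_subsolution {η m : ℝ → ℝ} {s l : ℝ} (hs : 0 < s)
    (hη : ∀ t ∈ Icc (0:ℝ) 1, s ≤ η t) (hm : ∀ t ∈ Icc (0:ℝ) 1, -m t ≤ l) (hl : l / s < π ^ 2) :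
    ∃ v v' : ℝ → ℝ, IsPrimitiveOn v v' 0 1 ∧ ∀ t ∈ Icc (0:ℝ) 1, v' t + v t ^ 2 / η t ≤ m t := by
  obtain ⟨k, hk, hkπ⟩ := exists_between ((sqrt_lt' pi_pos).2 hl)
  have hk0 : 0 < k := (sqrt_nonneg _).trans_lt hk
  have hlk : l < s * k ^ 2 := by
    have := (sqrt_lt' hk0).1 hk
    rwa [div_lt_iff₀ hs, mul_comm] at this
  -- `s k tan (k (1/2 - t))` solves `v' + v² / s = -s k²` on all of `[0, 1]` because `k < π`.
  refine ⟨_, _, isPrimitiveOn_mul_tan_sub_mul (k := k) (θ := k / 2) hs.ne' fun t ht => ?_,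
    fun t ht => ?_⟩
  · have h0 := mul_nonneg hk0.le ht.1
    have h1 := mul_le_mul_of_nonneg_left ht.2 hk0.le
    constructor <;> linarith
  · have := div_le_div_of_nonneg_left (sq_nonneg (s * k * tan (k / 2 - k * t))) hs (hη t ht)
    linarith [hm t ht]

theorem abs_sq_projIcc_sub_sq_le {M : ℝ} (hM : -M ≤ M) (x y : ℝ) :
    |(projIcc (-M) M hM x : ℝ) ^ 2 - (projIcc (-M) M hM y : ℝ) ^ 2| ≤ 2 * M * |x - y| := by
  have hlip : |(projIcc (-M) M hM x : ℝ) - projIcc (-M) M hM y| ≤ |x - y| := by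
    simpa [Real.dist_eq, Subtype.dist_eq] using (LipschitzWith.projIcc hM).dist_le_mul x y
  exact (abs_sq_sub_sq_le (abs_le.2 (projIcc (-M) M hM x).2)
    (abs_le.2 (projIcc (-M) M hM y).2)).trans (by gcongr; linarith [abs_nonneg (x - y)])

theorem exists_isPrimitiveOn_truncated_riccati {η m : ℝ → ℝ} {s C M : ℝ} (hs : 0 < s)
    (hη_meas : AEMeasurable η (volume.restrict (Icc 0 1))) (hη : ∀ t ∈ Icc (0:ℝ) 1, s ≤ η t)
    (hm_meas : Measurable m) (hm : ∀ t ∈ Icc (0:ℝ) 1, |m t| ≤ C) (hM : -M ≤ M) (x₀ : ℝ) :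
    ∃ g : ℝ → ℝ, g 0 = x₀ ∧
      IsPrimitiveOn g (fun u => m u - (projIcc (-M) M hM (g u) : ℝ) ^ 2 / η u) 0 1 := by
  have hM0 : 0 ≤ M := by linarith
  refine exists_isPrimitiveOn_of_lipschitzWith zero_le_one x₀ (L := ⟨2 * M / s, by positivity⟩)
    (F := fun u x => m u - (projIcc (-M) M hM x : ℝ) ^ 2 / η u)
    (fun g hg => ?_) fun u hu => LipschitzWith.of_dist_le_mul fun x y => ?_
  · have hPg : Continuous fun u => (projIcc (-M) M hM (g u) : ℝ) :=
      (continuous_subtype_val.comp continuous_projIcc).comp hg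
    refine ⟨(hm_meas.aemeasurable.sub ((hPg.measurable.pow_const 2).aemeasurable.div
      hη_meas)).aestronglyMeasurable,
      HasFiniteIntegral.restrict_of_bounded (C := C + M ^ 2 / s) measure_Icc_lt_top ?_⟩
    filter_upwards [ae_restrict_mem measurableSet_Icc] with u hu
    have hηu : 0 < η u := hs.trans_le (hη u hu)
    rw [Real.norm_eq_abs]
    refine (abs_sub _ _).trans (add_le_add (hm u hu) ?_)
    rw [abs_of_nonneg (by positivity)]
    have hP := (projIcc (-M) M hM (g u)).2
    exact div_le_div₀ (by positivity) (sq_le_sq' hP.1 hP.2) hs (hη u hu)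
  · have hηu : 0 < η u := hs.trans_le (hη u hu)
    change _ ≤ 2 * M / s * _
    simp only [Real.dist_eq, sub_sub_sub_cancel_left]
    rw [← sub_div, abs_div, abs_of_pos hηu, abs_sub_comm]
    exact (div_le_div₀ (by positivity) (abs_sq_projIcc_sub_sq_le hM x y) hs (hη u hu)).trans_eq
      (by ring)

theorem hasACRiccatiSol_of_subsolution {η m v v' : ℝ → ℝ} {s C : ℝ} (hs : 0 < s)
    (hη_meas : AEMeasurable η (volume.restrict (Icc 0 1))) (hη : ∀ t ∈ Icc (0:ℝ) 1, s ≤ η t)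
    (hm_meas : Measurable m) (hm : ∀ t ∈ Icc (0:ℝ) 1, |m t| ≤ C)
    (hv : IsPrimitiveOn v v' 0 1)
    (hsub : ∀ᵐ t ∂(volume.restrict (Icc (0:ℝ) 1)), v' t + v t ^ 2 / η t ≤ m t) :
    HasACRiccatiSol η m := by
  have h0 : (0:ℝ) ∈ Icc (0:ℝ) 1 := left_mem_Icc.2 zero_le_one
  obtain ⟨R, hR⟩ := hv.exists_abs_le
  have hC : 0 ≤ C := (abs_nonneg _).trans (hm 0 h0)
  have hR0 : 0 ≤ R := (abs_nonneg _).trans (hR 0 h0)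
  -- Between `v` and `v 0 + C t` the solution stays in `[-M, M]`, where the truncation is inactive.
  set M := R + C
  have hM : -M ≤ M := by linarith
  set P : ℝ → ℝ := fun x => (projIcc (-M) M hM x : ℝ)
  have hPx : ∀ x, |x| ≤ M → P x = x := fun x hx =>
    congrArg Subtype.val (projIcc_of_mem hM (abs_le.1 hx))
  obtain ⟨g, hg0, hg⟩ :=
    exists_isPrimitiveOn_truncated_riccati hs hη_meas hη hm_meas hm hM (v 0)
  have hupper : ∀ t ∈ Icc (0:ℝ) 1, g t ≤ M := by
    intro t ht
    have hint : ∫ u in (0:ℝ)..t, m u - P (g u) ^ 2 / η u ≤ ∫ u in (0:ℝ)..t, C :=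
      integral_mono_on ht.1 (hg.intervalIntegrable h0 ht) intervalIntegrable_const fun u hu => by
        have hu' : u ∈ Icc (0:ℝ) 1 := ⟨hu.1, hu.2.trans ht.2⟩
        have := div_nonneg (sq_nonneg (P (g u))) (hs.trans_le (hη u hu')).le
        linarith [(abs_le.1 (hm u hu')).2]
    rw [intervalIntegral.integral_const, smul_eq_mul, sub_zero] at hint
    rw [hg.2 t ht, hg0]
    nlinarith [(abs_le.1 (hR 0 h0)).2, ht.2]
  have hlower : ∀ t ∈ Icc (0:ℝ) 1, v t ≤ g t := by
    refine hv.le_of_sub_le_mul_abs hg (K := 2 * M / s) (by positivity) hg0.ge ?_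
    filter_upwards [hsub, ae_restrict_mem measurableSet_Icc] with u hu hmem
    have hηu : 0 < η u := hs.trans_le (hη u hmem)
    calc v' u - (m u - P (g u) ^ 2 / η u) ≤ (P (g u) ^ 2 - P (v u) ^ 2) / η u := by
          rw [hPx (v u) ((hR u hmem).trans (by linarith)), sub_div]
          linarith
      _ ≤ 2 * M * |v u - g u| / s := by
          rw [abs_sub_comm]
          exact div_le_div₀ (by positivity) ((le_abs_self _).trans
            (abs_sq_projIcc_sub_sq_le hM _ _)) hs (hη u hmem)
      _ = 2 * M / s * |v u - g u| := by ring
  have hg_abs : ∀ t ∈ Icc (0:ℝ) 1, |g t| ≤ M := fun t ht =>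
    abs_le.2 ⟨by linarith [(abs_le.1 (hR t ht)).1, hlower t ht], hupper t ht⟩
  refine ⟨g, _, hg.1, hg.2, ?_⟩
  filter_upwards [ae_restrict_mem measurableSet_Icc] with t ht
  simp only [P, hPx _ (hg_abs t ht)]
  ring

theorem exists_tan_sub_mul_le {k θ : ℝ} (hk : 0 < k) (hθ : θ ∈ Ioo (-(π / 2)) (π / 2)) (y : ℝ) :
    ∃ t₁, 0 ≤ t₁ ∧ k * t₁ < θ + π / 2 ∧ tan (θ - k * t₁) ≤ y := by
  have hγ : -(π / 2) < min (arctan y) θ := lt_min (neg_pi_div_two_lt_arctan y) hθ.1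
  refine ⟨(θ - min (arctan y) θ) / k, div_nonneg (sub_nonneg.2 (min_le_right _ _)) hk.le, ?_, ?_⟩
  · rw [mul_div_cancel₀ _ hk.ne']
    linarith
  · rw [mul_div_cancel₀ _ hk.ne', sub_sub_cancel]
    exact (strictMonoOn_tan.monotoneOn ⟨hγ, (min_le_right _ _).trans_lt hθ.2⟩
      ⟨neg_pi_div_two_lt_arctan y, arctan_lt_pi_div_two y⟩ (min_le_left _ _)).trans_eq
      (tan_arctan y)

theorem not_hasACRiccatiSol_of_le {η m : ℝ → ℝ} {S c : ℝ} (hS : 0 < S)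
    (hη : ∀ t ∈ Icc (0:ℝ) 1, η t ≤ S) (hηpos : ∀ t ∈ Icc (0:ℝ) 1, 0 < η t)
    (hm : ∀ᵐ t ∂(volume.restrict (Icc (0:ℝ) 1)), m t ≤ -c) (hc : π ^ 2 ≤ c / S) :
    ¬ HasACRiccatiSol η m := by
  rintro ⟨g, g', hg'_int, hg_eq, hg_ode⟩
  have hg : IsPrimitiveOn g g' 0 1 := ⟨hg'_int, hg_eq⟩
  obtain ⟨B, hB⟩ := hg.exists_abs_le
  set k := √(c / S)
  have hkπ : π ≤ k := le_sqrt_of_sq_le hc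
  have hk0 : 0 < k := pi_pos.trans_le hkπ
  have hc_eq : c = S * k ^ 2 := by
    rw [sq_sqrt ((sq_nonneg π).trans hc)]
    field_simp
  -- `Y t = S k tan (θ - k t)` solves `Y' + Y² / S = -c` with `Y 0 = g 0`, and falls below
  -- `-(B + 1)` at some `t₁` with `k t₁ < θ + π / 2 < π ≤ k`.
  set θ := arctan (g 0 / (S * k))
  have hθ : θ ∈ Ioo (-(π / 2)) (π / 2) := ⟨neg_pi_div_two_lt_arctan _, arctan_lt_pi_div_two _⟩
  obtain ⟨t₁, ht₁0, ht₁θ, hYt₁⟩ := exists_tan_sub_mul_le hk0 hθ (-(B + 1) / (S * k))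
  have ht₁1 : t₁ ≤ 1 := le_of_lt (by nlinarith [hθ.2])
  have hdom : ∀ t ∈ Icc 0 t₁, θ - k * t ∈ Ioo (-(π / 2)) (π / 2) := fun t ht =>
    ⟨by nlinarith [mul_le_mul_of_nonneg_left ht.2 hk0.le],
      by nlinarith [hθ.2, mul_nonneg hk0.le ht.1]⟩
  have hY := isPrimitiveOn_mul_tan_sub_mul hS.ne' hdom
  obtain ⟨BY, hBY⟩ := hY.exists_abs_le
  have hsub : Icc 0 t₁ ⊆ Icc (0:ℝ) 1 := Icc_subset_Icc_right ht₁1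
  have hB0 : 0 ≤ B := (abs_nonneg _).trans (hB 0 (hsub (left_mem_Icc.2 ht₁0)))
  have hBY0 : 0 ≤ BY := (abs_nonneg _).trans (hBY 0 (left_mem_Icc.2 ht₁0))
  have hgY := (hg.mono_right ht₁1).le_of_sub_le_mul_abs hY (K := 2 * (B + BY) / S)
    (by positivity) (by simp [θ, tan_arctan, mul_div_cancel₀ _ (mul_pos hS hk0).ne']) ?_ t₁
    (right_mem_Icc.2 ht₁0)
  · have : S * k * tan (θ - k * t₁) ≤ -(B + 1) := by
      calc S * k * tan (θ - k * t₁) ≤ S * k * (-(B + 1) / (S * k)) := by gcongr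
        _ = -(B + 1) := by field_simp
    linarith [(abs_le.1 (hB t₁ (hsub (right_mem_Icc.2 ht₁0)))).1]
  filter_upwards [ae_restrict_of_ae_restrict_of_subset hsub hm,
    ae_restrict_of_ae_restrict_of_subset hsub hg_ode, ae_restrict_mem measurableSet_Icc]
    with u hmu hode hu
  set Y := S * k * tan (θ - k * u)
  have hgu : g u ^ 2 / S ≤ g u ^ 2 / η u :=
    div_le_div_of_nonneg_left (sq_nonneg _) (hηpos u (hsub hu)) (hη u (hsub hu))
  calc g' u - (-(S * k ^ 2) - Y ^ 2 / S) ≤ (Y ^ 2 - g u ^ 2) / S := by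
        rw [sub_div]
        linarith
    _ ≤ 2 * (B + BY) * |g u - Y| / S := by
        gcongr
        rw [abs_sub_comm]
        exact (le_abs_self _).trans (abs_sq_sub_sq_le (by linarith [hBY u hu])
          (by linarith [hB u (hsub hu)]))
    _ = 2 * (B + BY) / S * |g u - Y| := by ring

/-- (i) if `sup [m]₋ / inf η < π²` then the Riccati equation `g' + g²/η = m` has an
absolutely continuous solution on `[0,1]`; (ii) if `m ≤ -c` a.e. with `c / sup η ≥ π²` then
there is no such solution. -/
theorem stmt_4 (η m : ℝ → ℝ)
    (hη : ContinuousOn η (Icc (0:ℝ) 1)) (hηpos : ∀ t ∈ Icc (0:ℝ) 1, 0 < η t)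
    (hm_meas : Measurable m) (hm_bdd : ∃ C, ∀ t ∈ Icc (0:ℝ) 1, |m t| ≤ C) :
    (sSup ((fun t => max (-(m t)) 0) '' Icc (0:ℝ) 1) / sInf (η '' Icc (0:ℝ) 1) < Real.pi ^ 2 →
      HasACRiccatiSol η m) ∧
    (∀ c : ℝ, 0 ≤ c → (∀ᵐ t ∂(volume.restrict (Icc (0:ℝ) 1)), m t ≤ -c) →
      Real.pi ^ 2 ≤ c / sSup (η '' Icc (0:ℝ) 1) → ¬ HasACRiccatiSol η m) := by
  have hcpt : IsCompact (η '' Icc (0:ℝ) 1) := isCompact_Icc.image_of_continuousOn hη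
  have hne : (η '' Icc (0:ℝ) 1).Nonempty := (nonempty_Icc.2 zero_le_one).image η
  have hpos : ∀ y ∈ η '' Icc (0:ℝ) 1, 0 < y := forall_mem_image.2 hηpos
  obtain ⟨C, hC⟩ := hm_bdd
  refine ⟨fun hlt => ?_, fun c _ hmc hcS => ?_⟩
  · have hbdd : BddAbove ((fun t => max (-(m t)) 0) '' Icc (0:ℝ) 1) :=
      ⟨C, forall_mem_image.2 fun t ht =>
        max_le ((neg_le_abs _).trans (hC t ht)) ((abs_nonneg _).trans (hC t ht))⟩
    have hs := hpos _ (hcpt.sInf_mem hne)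
    have hηs : ∀ t ∈ Icc (0:ℝ) 1, sInf (η '' Icc (0:ℝ) 1) ≤ η t :=
      fun t ht => csInf_le hcpt.bddBelow (mem_image_of_mem η ht)
    obtain ⟨v, v', hv, hsub⟩ := exists_riccati_subsolution hs hηs
      (fun t ht => (le_max_left _ _).trans (le_csSup hbdd (mem_image_of_mem _ ht))) hlt
    exact hasACRiccatiSol_of_subsolution hs (hη.aemeasurable measurableSet_Icc) hηs hm_meas hC hv
      ((ae_restrict_iff' measurableSet_Icc).2 (ae_of_all _ hsub))
  · exact not_hasACRiccatiSol_of_le (hpos _ (hcpt.sSup_mem hne))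
      (fun t ht => le_csSup hcpt.bddAbove (mem_image_of_mem η ht)) hηpos hmc hcS
end

section
/- The map q ↦ φ(q) is a bijection from the set { q ∈ L²([0,1]) : ∫₀¹ q(x) dx = 0 and ∫₀¹ exp(∫₀ˣ q(u) du) dx = 1 } onto Diff₀²([0,1]), and its inverse is the map ψ ↦ (log ψ')' = ψ''/ψ'. -/
/-!
Write `Q x = ∫₀ˣ q`, so that `φ(q)' = exp ∘ Q` on `[0,1]`. The primitive `Q` is absolutely
continuous with `Q' = q` almost everywhere (Lebesgue differentiation), so the chain rule
`∫₀ˣ q · G'(Q) = G (Q x) - G 0` holds for every differentiable `G` that is locally Lipschitz on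
a set containing the range of `Q`.
With `G = exp` it shows that `f' = exp ∘ Q - 1` is the primitive of `q · exp ∘ Q ∈ L²`, whence
`φ(q) = id + f ∈ Diff₀²`. Conversely, for `ψ = id + f` the chain rule with `G = log (1 + ·)` gives
`∫₀ˣ f''/(1 + f') = log (1 + f' x)`, so `q = f''/(1 + f')` satisfies `exp ∘ Q = ψ'` and `φ(q) = ψ`.
Finally, `φ(q) = ψ` forces `exp ∘ Q = ψ'`, so `q` has the same primitive as `f''/(1 + f')` and
agrees with it almost everywhere; this is the inverse formula, and it also yields injectivity.
-/

open Set MeasureTheory intervalIntegral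

/-- Lebesgue measure restricted to `[0,1]`. -/
noncomputable def mu01 : MeasureTheory.Measure ℝ := MeasureTheory.volume.restrict (Icc (0:ℝ) 1)

/-- `Φ(q)(x) = ∫₀ˣ exp(∫₀ʸ q(u) du) dy`, i.e. the diffeomorphism `φ(q)` built from
`q ∈ L²([0,1])`. -/
noncomputable def PhiMap (q : MeasureTheory.Lp ℝ 2 mu01) : ℝ → ℝ :=
  fun x => ∫ y in (0:ℝ)..x, Real.exp (∫ u in (0:ℝ)..y, (q : ℝ → ℝ) u)

/-- The constraint set `{q ∈ L²([0,1]) : ∫₀¹ q = 0, ∫₀¹ exp(∫₀ˣ q) dx = 1}`. -/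
def Qset : Set (MeasureTheory.Lp ℝ 2 mu01) :=
  {q | (∫ x in (0:ℝ)..1, (q : ℝ → ℝ) x) = 0 ∧
    (∫ x in (0:ℝ)..1, Real.exp (∫ u in (0:ℝ)..x, (q : ℝ → ℝ) u)) = 1}

/-- `ψ, f, f', h` witness that `ψ ∈ Diff₀²([0,1])`: on `[0,1]`, `ψ = Id + f` with `f` of class
`C¹`, `f(0) = f(1) = 0`, `f'(0) = f'(1) = 0`, `1 + f' > 0`, and `f'` absolutely continuous with
derivative `h ∈ L²([0,1])`. -/
structure DiffWitness (ψ f f' h : ℝ → ℝ) : Prop where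
  eq_id_add : ∀ x ∈ Icc (0:ℝ) 1, ψ x = x + f x
  deriv_f : ∀ x ∈ Icc (0:ℝ) 1, HasDerivWithinAt f (f' x) (Icc (0:ℝ) 1) x
  cont_deriv : ContinuousOn f' (Icc (0:ℝ) 1)
  f_zero : f 0 = 0
  f_one : f 1 = 0
  f'_zero : f' 0 = 0
  f'_one : f' 1 = 0
  jac_pos : ∀ x ∈ Icc (0:ℝ) 1, 0 < 1 + f' x
  h_L2 : MeasureTheory.MemLp h 2 mu01
  f'_int : ∀ x ∈ Icc (0:ℝ) 1, f' x = ∫ u in (0:ℝ)..x, h u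

/-- The group `Diff₀²([0,1])` of Sobolev diffeomorphisms, as a set of real functions
(constrained on `[0,1]`). -/
def DiffSet : Set (ℝ → ℝ) := {ψ | ∃ f f' h : ℝ → ℝ, DiffWitness ψ f f' h}

open Filter Topology
open scoped NNReal ENNReal

section AbsolutelyContinuous

open AbsolutelyContinuousOnInterval

variable {X Y : Type*} [PseudoMetricSpace X] [PseudoMetricSpace Y] {f : ℝ → X} {a b : ℝ}

theorem LipschitzOnWith.comp_absolutelyContinuousOnInterval {G : X → Y} {K : ℝ≥0} {s : Set X}
    (hG : LipschitzOnWith K G s) (hf : AbsolutelyContinuousOnInterval f a b)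
    (hfs : MapsTo f (uIcc a b) s) : AbsolutelyContinuousOnInterval (G ∘ f) a b := by
  have hK : Tendsto (fun E : ℕ × (ℕ → ℝ × ℝ) =>
      (K : ℝ) * ∑ i ∈ Finset.range E.1, dist (f (E.2 i).1) (f (E.2 i).2))
      (totalLengthFilter ⊓ 𝓟 (disjWithin a b)) (𝓝 0) := by
    simpa using Tendsto.const_mul (K : ℝ) hf
  refine squeeze_zero' (Eventually.of_forall fun _ => Finset.sum_nonneg fun _ _ => dist_nonneg)
    ?_ hK
  filter_upwards [eventually_inf_principal.2 (Eventually.of_forall fun _ hE => hE)]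
    with ⟨n, I⟩ hnI
  rw [Finset.mul_sum]
  exact Finset.sum_le_sum fun i hi =>
    hG.dist_le_mul _ (hfs (hnI.1 i hi).1) _ (hfs (hnI.1 i hi).2)

theorem LocallyLipschitzOn.comp_absolutelyContinuousOnInterval {F : Type*}
    [SeminormedAddCommGroup F] {f : ℝ → F} {G : F → Y} {U : Set F}
    (hG : LocallyLipschitzOn U G) (hf : AbsolutelyContinuousOnInterval f a b)
    (hfU : MapsTo f (uIcc a b) U) : AbsolutelyContinuousOnInterval (G ∘ f) a b := by
  have hc : IsCompact (f '' uIcc a b) := isCompact_uIcc.image_of_continuousOn hf.continuousOn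
  have hl : LocallyLipschitzOn (f '' uIcc a b) G := hG.mono hfU.image_subset
  obtain ⟨K, hK⟩ := hl.exists_lipschitzOnWith_of_compact hc
  exact hK.comp_absolutelyContinuousOnInterval hf (mapsTo_image f _)

theorem AbsolutelyContinuousOnInterval.integral_eq_sub_of_ae_hasDerivAt {f g : ℝ → ℝ}
    (hf : AbsolutelyContinuousOnInterval f a b)
    (hg : ∀ᵐ x, x ∈ uIcc a b → HasDerivAt f (g x) x) :
    ∫ x in a..b, g x = f b - f a := by
  rw [← hf.integral_deriv_eq_sub]
  refine integral_congr_ae ?_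
  filter_upwards [hg] with x hx hx' using (hx (uIoc_subset_uIcc hx')).deriv.symm

end AbsolutelyContinuous

theorem integral_mul_deriv_comp_primitive {q G G' : ℝ → ℝ} {U : Set ℝ} {a b : ℝ}
    (hq : IntervalIntegrable q volume a b) (hGU : LocallyLipschitzOn U G)
    (hG : ∀ y ∈ U, HasDerivAt G (G' y) y)
    (hU : MapsTo (fun x => ∫ t in a..x, q t) (uIcc a b) U) :
    ∫ x in a..b, q x * G' (∫ t in a..x, q t) = G (∫ t in a..b, q t) - G 0 := by
  have hac := hGU.comp_absolutelyContinuousOnInterval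
    (hq.absolutelyContinuousOnInterval_intervalIntegral left_mem_uIcc) hU
  have := hac.integral_eq_sub_of_ae_hasDerivAt (g := fun x => q x * G' (∫ t in a..x, q t)) ?_
  · simpa using this
  filter_upwards [hq.ae_hasDerivAt_integral] with x hx hxab
  rw [mul_comm]
  exact (hG _ (hU hxab)).comp x (hx hxab a left_mem_uIcc)

theorem ae_eq_restrict_Icc_of_primitive_eq {f g : ℝ → ℝ} {a b : ℝ}
    (hf : IntervalIntegrable f volume a b) (hg : IntervalIntegrable g volume a b)
    (h : ∀ x ∈ Icc a b, ∫ t in a..x, f t = ∫ t in a..x, g t) :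
    f =ᵐ[volume.restrict (Icc a b)] g := by
  rw [Measure.restrict_congr_set Ioo_ae_eq_Icc.symm, EventuallyEq,
    ae_restrict_iff' measurableSet_Ioo]
  filter_upwards [hf.ae_hasDerivAt_integral, hg.ae_hasDerivAt_integral] with x hfx hgx hx
  have hx' : x ∈ uIcc a b := Icc_subset_uIcc (Ioo_subset_Icc_self hx)
  refine (hfx hx' a left_mem_uIcc).unique ((hgx hx' a left_mem_uIcc).congr_of_eventuallyEq ?_)
  filter_upwards [Ioo_mem_nhds hx.1 hx.2] with y hy using h y (Ioo_subset_Icc_self hy)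

theorem integral_congr_of_ae_eq_restrict_Icc {f g : ℝ → ℝ} {a b x : ℝ}
    (h : f =ᵐ[volume.restrict (Icc a b)] g) (hx : x ∈ Icc a b) :
    ∫ t in a..x, f t = ∫ t in a..x, g t := by
  refine integral_congr_ae ?_
  filter_upwards [(ae_restrict_iff' measurableSet_Icc).1 h] with t ht htx
  rw [uIoc_of_le hx.1] at htx
  exact ht ⟨htx.1.le, htx.2.trans hx.2⟩

theorem ContinuousOn.hasDerivWithinAt_integral_Icc {f : ℝ → ℝ} {a b x : ℝ}
    (hf : ContinuousOn f (Icc a b)) (hx : x ∈ Icc a b) :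
    HasDerivWithinAt (fun y => ∫ t in a..y, f t) (f x) (Icc a b) x := by
  have hab : a ≤ b := hx.1.trans hx.2
  set F := IccExtend hab ((Icc a b).domRestrict f)
  have hFf : EqOn F f (Icc a b) := fun y hy => IccExtend_of_mem hab _ hy
  have hF : Continuous F := continuous_IccExtend_iff.2 hf.domRestrict
  have hprim : EqOn (fun y => ∫ t in a..y, f t) (fun y => ∫ t in a..y, F t) (Icc a b) :=
    fun y hy => integral_congr fun t ht =>
      (hFf (uIcc_subset_Icc (left_mem_Icc.2 hab) hy ht)).symm
  rw [← hFf hx]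
  exact (hF.integral_hasStrictDerivAt a x).hasDerivAt.hasDerivWithinAt.congr hprim (hprim hx)

theorem MeasureTheory.MemLp.mul_continuousOn {μ : Measure ℝ} {f g : ℝ → ℝ} {s : Set ℝ}
    {p : ℝ≥0∞}    (hf : MemLp f p (μ.restrict s)) (hg : ContinuousOn g s) (hs : IsCompact s) :
    MemLp (fun x => f x * g x) p (μ.restrict s) := by
  obtain ⟨C, hC⟩ := hs.exists_bound_of_continuousOn hg
  refine hf.of_le_mul (c := C)
    (hf.aestronglyMeasurable.mul (hg.aestronglyMeasurable hs.measurableSet)) ?_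
  filter_upwards [ae_restrict_mem hs.measurableSet] with x hx
  rw [norm_mul, mul_comm]
  exact mul_le_mul_of_nonneg_right (hC x hx) (norm_nonneg _)

instance : IsFiniteMeasure mu01 := inferInstanceAs (IsFiniteMeasure (volume.restrict _))

theorem MeasureTheory.MemLp.intervalIntegrable_mu01 {g : ℝ → ℝ} (hg : MemLp g 2 mu01) {x : ℝ}
    (hx : x ∈ Icc (0:ℝ) 1) : IntervalIntegrable g volume 0 x :=
  (intervalIntegrable_iff_integrableOn_Icc_of_le hx.1).2
    (IntegrableOn.mono_set (hg.integrable one_le_two) (Icc_subset_Icc_right hx.2))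

theorem continuousOn_primitive_Lp (q : Lp ℝ 2 mu01) :
    ContinuousOn (fun x => ∫ u in (0:ℝ)..x, (q : ℝ → ℝ) u) (Icc (0:ℝ) 1) := by
  have hq : IntegrableOn (q : ℝ → ℝ) (uIcc 0 1) volume := by
    rw [uIcc_of_le zero_le_one]
    exact (Lp.memLp q).integrable one_le_two
  simpa [uIcc_of_le zero_le_one] using continuousOn_primitive_interval hq

theorem hasDerivWithinAt_phiMap (q : Lp ℝ 2 mu01) {x : ℝ} (hx : x ∈ Icc (0:ℝ) 1) :
    HasDerivWithinAt (PhiMap q) (Real.exp (∫ u in (0:ℝ)..x, (q : ℝ → ℝ) u)) (Icc (0:ℝ) 1) x :=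
  ContinuousOn.hasDerivWithinAt_integral_Icc
    (Real.continuous_exp.comp_continuousOn (continuousOn_primitive_Lp q)) hx

theorem phiMap_mem_diffSet {q : Lp ℝ 2 mu01} (hq : q ∈ Qset) : PhiMap q ∈ DiffSet := by
  set Q : ℝ → ℝ := fun x => ∫ u in (0:ℝ)..x, (q : ℝ → ℝ) u
  have hexpQ : ContinuousOn (fun x => Real.exp (Q x)) (Icc (0:ℝ) 1) :=
    Real.continuous_exp.comp_continuousOn (continuousOn_primitive_Lp q)
  refine ⟨fun x => PhiMap q x - x, fun x => Real.exp (Q x) - 1,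
    fun x => q x * Real.exp (Q x), ⟨fun x _ => by ring,
    fun x hx => (hasDerivWithinAt_phiMap q hx).sub (hasDerivWithinAt_id x _),
    hexpQ.sub continuousOn_const, by simp [PhiMap], sub_eq_zero.2 hq.2, by simp [Q],
    by simp [Q, hq.1], fun x _ => by simpa using Real.exp_pos (Q x),
    (Lp.memLp q).mul_continuousOn hexpQ isCompact_Icc, fun x hx => ?_⟩⟩
  rw [integral_mul_deriv_comp_primitive ((Lp.memLp q).intervalIntegrable_mu01 hx)
    Real.contDiff_exp.locallyLipschitz.locallyLipschitzOn (fun y _ => Real.hasDerivAt_exp y)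
    (mapsTo_univ _ _), Real.exp_zero]

namespace DiffWitness

variable {ψ f f' h : ℝ → ℝ}

theorem hasDerivWithinAt (wit : DiffWitness ψ f f' h) {x : ℝ} (hx : x ∈ Icc (0:ℝ) 1) :
    HasDerivWithinAt ψ (1 + f' x) (Icc (0:ℝ) 1) x :=
  ((hasDerivWithinAt_id x _).add (wit.deriv_f x hx)).congr wit.eq_id_add (wit.eq_id_add x hx)

theorem integral_one_add (wit : DiffWitness ψ f f' h) {x : ℝ} (hx : x ∈ Icc (0:ℝ) 1) :
    ∫ u in (0:ℝ)..x, (1 + f' u) = ψ x := by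
  have hsub : Icc 0 x ⊆ Icc (0:ℝ) 1 := Icc_subset_Icc_right hx.2
  rw [integral_eq_sub_of_hasDerivAt_of_le hx.1
    (fun y hy => (wit.hasDerivWithinAt (hsub hy)).continuousWithinAt.mono hsub)
    (fun y hy => (wit.hasDerivWithinAt (hsub (Ioo_subset_Icc_self hy))).hasDerivAt
      (Icc_mem_nhds hy.1 (hy.2.trans_le hx.2)))
    (ContinuousOn.intervalIntegrable_of_Icc hx.1
      ((continuousOn_const.add wit.cont_deriv).mono hsub)),
    wit.eq_id_add 0 (left_mem_Icc.2 zero_le_one), wit.f_zero, add_zero, sub_zero]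

theorem memLp_div (wit : DiffWitness ψ f f' h) : MemLp (fun x => h x / (1 + f' x)) 2 mu01 := by
  have hinv : ContinuousOn (fun x => (1 + f' x)⁻¹) (Icc (0:ℝ) 1) :=
    (continuousOn_const.add wit.cont_deriv).inv₀ fun x hx => (wit.jac_pos x hx).ne'
  have := wit.h_L2.mul_continuousOn hinv isCompact_Icc
  simp only [← div_eq_mul_inv] at this
  exact this

theorem integral_div (wit : DiffWitness ψ f f' h) {x : ℝ} (hx : x ∈ Icc (0:ℝ) 1) :
    ∫ u in (0:ℝ)..x, h u / (1 + f' u) = Real.log (1 + f' x) := by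
  have hsub : uIcc 0 x ⊆ Icc (0:ℝ) 1 := uIcc_subset_Icc (left_mem_Icc.2 zero_le_one) hx
  have hprim : ∀ y ∈ uIcc 0 x, ∫ u in (0:ℝ)..y, h u = f' y :=
    fun y hy => (wit.f'_int y (hsub hy)).symm
  have hlog : ∀ y ∈ Ioi (-1 : ℝ), HasDerivAt (fun t => Real.log (1 + t)) (1 / (1 + y)) y :=
    fun y hy => ((hasDerivAt_id y).const_add 1).log (by simp at hy ⊢; linarith)
  have hchain := integral_mul_deriv_comp_primitive (wit.h_L2.intervalIntegrable_mu01 hx)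
    ((ContDiffOn.log (by fun_prop) fun y hy => by simp at hy ⊢; linarith).locallyLipschitzOn
      (convex_Ioi _)) hlog
    (fun y hy => by have := wit.jac_pos y (hsub hy); simp [hprim y hy]; linarith)
  calc ∫ u in (0:ℝ)..x, h u / (1 + f' u)
      = ∫ u in (0:ℝ)..x, h u * (1 / (1 + ∫ t in (0:ℝ)..u, h t)) :=
        integral_congr fun u hu => by simp [hprim u hu, div_eq_mul_inv]
    _ = Real.log (1 + f' x) := by rw [hchain, hprim x right_mem_uIcc]; simp

end DiffWitness

theorem ae_eq_div_of_phiMap_eqOn (q : Lp ℝ 2 mu01) {ψ f f' h : ℝ → ℝ}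
    (wit : DiffWitness ψ f f' h) (heq : EqOn (PhiMap q) ψ (Icc (0:ℝ) 1)) :
    (q : ℝ → ℝ) =ᵐ[mu01] fun x => h x / (1 + f' x) := by
  refine ae_eq_restrict_Icc_of_primitive_eq
    ((Lp.memLp q).intervalIntegrable_mu01 (right_mem_Icc.2 zero_le_one))
    (wit.memLp_div.intervalIntegrable_mu01 (right_mem_Icc.2 zero_le_one)) fun x hx => ?_
  have hexp : Real.exp (∫ u in (0:ℝ)..x, (q : ℝ → ℝ) u) = 1 + f' x :=
    (uniqueDiffOn_Icc_zero_one x hx).eq_deriv _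
      ((hasDerivWithinAt_phiMap q hx).congr heq.symm (heq hx).symm) (wit.hasDerivWithinAt hx)
  rw [wit.integral_div hx, ← hexp, Real.log_exp]

theorem injOn_phiMap : InjOn PhiMap Qset := by
  intro q₁ _ q₂ hq₂ heq
  obtain ⟨f, f', h, wit⟩ := phiMap_mem_diffSet hq₂
  exact Lp.ext ((ae_eq_div_of_phiMap_eqOn q₁ wit (heq ▸ eqOn_refl _ _)).trans
    (ae_eq_div_of_phiMap_eqOn q₂ wit (eqOn_refl _ _)).symm)

theorem exists_phiMap_eqOn {ψ f f' h : ℝ → ℝ} (wit : DiffWitness ψ f f' h) :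
    ∃ q ∈ Qset, EqOn (PhiMap q) ψ (Icc (0:ℝ) 1) := by
  set q := wit.memLp_div.toLp
  have hQ : ∀ x ∈ Icc (0:ℝ) 1, ∫ u in (0:ℝ)..x, (q : ℝ → ℝ) u = Real.log (1 + f' x) :=
    fun x hx => (integral_congr_of_ae_eq_restrict_Icc wit.memLp_div.coeFn_toLp hx).trans
      (wit.integral_div hx)
  have hPhi : EqOn (PhiMap q) ψ (Icc (0:ℝ) 1) := fun x hx => by
    rw [← wit.integral_one_add hx]
    refine integral_congr fun y hy => ?_
    have hy' : y ∈ Icc (0:ℝ) 1 := uIcc_subset_Icc (left_mem_Icc.2 zero_le_one) hx hy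
    simp only [hQ y hy', Real.exp_log (wit.jac_pos y hy')]
  have h1 : (1:ℝ) ∈ Icc (0:ℝ) 1 := right_mem_Icc.2 zero_le_one
  refine ⟨q, ⟨?_, ?_⟩, hPhi⟩
  · rw [hQ 1 h1, wit.f'_one, add_zero, Real.log_one]
  · change PhiMap q 1 = 1
    rw [hPhi h1, wit.eq_id_add 1 h1, wit.f_one, add_zero]

/-- the map `q ↦ φ(q)` is a bijection from
`{q ∈ L²([0,1]) : ∫₀¹ q = 0, ∫₀¹ exp(∫₀ˣ q) dx = 1}` onto `Diff₀²([0,1])`, with inverse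
`ψ ↦ (log ψ')' = ψ''/ψ'`. -/
theorem stmt_6 :
    (∀ q ∈ Qset, PhiMap q ∈ DiffSet) ∧
    Set.InjOn PhiMap Qset ∧
    (∀ ψ ∈ DiffSet, ∃ q ∈ Qset, Set.EqOn (PhiMap q) ψ (Icc (0:ℝ) 1)) ∧
    -- the inverse is `ψ ↦ (log ψ')' = ψ''/ψ'`: if `PhiMap q = ψ` on `[0,1]` then
    -- `q = h / (1 + f') = ψ''/ψ'` almost everywhere on `[0,1]`.
    (∀ q ∈ Qset, ∀ ψ f f' h : ℝ → ℝ, DiffWitness ψ f f' h →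
      Set.EqOn (PhiMap q) ψ (Icc (0:ℝ) 1) →
      (q : ℝ → ℝ) =ᵐ[mu01] fun x => h x / (1 + f' x)) :=
  ⟨fun _ hq => phiMap_mem_diffSet hq, injOn_phiMap,
    fun _ ⟨_, _, _, wit⟩ => exists_phiMap_eqOn wit,
    fun q _ _ _ _ _ wit heq => ae_eq_div_of_phiMap_eqOn q wit heq⟩
end

section
/- Let q ∈ L²([0,1]) satisfy ∫₀¹ q(x) dx = 0 and ∫₀¹ η(q)(x) dx = 1, and write η = η(q), φ = φ(q). Then: (i) ∫₀¹ η φ dx = 1/2 and ∫₀¹ η φ² dx = 1/3, so that the Gram matrix of the pair (η, φη) for the inner product ⟨f,g⟩_{1/η} = ∫₀¹ f g / η dx is the Hilbert matrix H₂ = [[1, 1/2], [1/2, 1/3]]; (ii) the map π_q defined by π_q(f) = f − (4A − 6B)·η − (−6A + 12B)·φη, where A = ∫₀¹ f dx and B = ∫₀¹ f φ dx (equivalently π_q(f) = f − [η, φη] H₂⁻¹ [⟨f,η⟩_{1/η}; ⟨f,φη⟩_{1/η}], noting ⟨f,η⟩_{1/η} = A and ⟨f,φη⟩_{1/η} = B),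 is the orthogonal projection of L²([0,1]) onto the closed subspace T_q = { X ∈ L²([0,1]) : ∫₀¹ X dx = 0 and ∫₀¹ X φ dx = 0 } for the inner product ⟨·,·⟩_{1/η}: that is, π_q(f) ∈ T_q for every f, and ⟨f − π_q(f), X⟩_{1/η} = 0 for every f ∈ L²([0,1]) and every X ∈ T_q. -/
/-! Since `φ' = η`, `φ(0) = 0` and `φ(1) = ∫₀¹ η = 1`, the substitution `u = φ(x)` gives
`∫₀¹ η φⁿ = 1 / (n + 1)`: the Gram matrix of `(η, φη)` for `⟨·,·⟩_{1/η}` is the Hilbert matrix.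
As `⟨X, η⟩_{1/η} = ∫₀¹ X` and `⟨X, φη⟩_{1/η} = ∫₀¹ X φ`, the space `T_q` is the orthogonal
complement of `span(η, φη)`, and both halves of (ii) reduce to `H₂ H₂⁻¹ = 1`. -/

open Set MeasureTheory intervalIntegral

/-- `η(q)(x) = exp(∫₀ˣ q(u) du)`. -/
noncomputable def etaFun (q : ℝ → ℝ) (x : ℝ) : ℝ := Real.exp (∫ u in (0:ℝ)..x, q u)

/-- `φ(q)(x) = ∫₀ˣ η(q)(y) dy`. -/
noncomputable def phiFun (q : ℝ → ℝ) (x : ℝ) : ℝ := ∫ y in (0:ℝ)..x, etaFun q y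

/-- The projection `π_q(f) = f − (4A − 6B)·η − (−6A + 12B)·φη` with `A = ∫₀¹ f` and
`B = ∫₀¹ f φ`, i.e. `π_q(f) = f − [η, φη] H₂⁻¹ [⟨f,η⟩_{1/η}; ⟨f,φη⟩_{1/η}]`. -/
noncomputable def projQ (q f : ℝ → ℝ) (x : ℝ) : ℝ :=
  f x - (4 * (∫ y in (0:ℝ)..1, f y) - 6 * (∫ y in (0:ℝ)..1, f y * phiFun q y)) * etaFun q x
      - (-6 * (∫ y in (0:ℝ)..1, f y) + 12 * (∫ y in (0:ℝ)..1, f y * phiFun q y)) *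
          (phiFun q x * etaFun q x)

instance isFiniteMeasure_mu01 : IsFiniteMeasure mu01 := ⟨by
  rw [mu01, Measure.restrict_apply_univ, Real.volume_Icc]; norm_num⟩

theorem MeasureTheory.MemLp.intervalIntegrable_zero_one {g : ℝ → ℝ} {p : ENNReal}
    (hp : 1 ≤ p) (hg : MemLp g p mu01) : IntervalIntegrable g volume 0 1 := by
  rw [intervalIntegrable_iff_integrableOn_Ioc_of_le zero_le_one]
  exact IntegrableOn.mono_set (hg.integrable hp) Ioc_subset_Icc_self

theorem integral_mul_primitive_pow {η : ℝ → ℝ} {a b : ℝ} (hη : ContinuousOn η (uIcc a b))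
    (n : ℕ) :
    ∫ x in a..b, η x * (∫ t in a..x, η t) ^ n = (∫ t in a..b, η t) ^ (n + 1) / (n + 1) := by
  have hint := hη.intervalIntegrable (μ := volume)
  have hderiv : ∀ x ∈ Ioo (min a b) (max a b),
      HasDerivWithinAt (fun x => ∫ t in a..x, η t) (η x) (Ioi x) x := fun x hx =>
    (integral_hasDerivAt_right
      (hint.mono_set (uIcc_subset_uIcc left_mem_uIcc (Ioo_subset_Icc_self hx)))
      ((hη.mono Ioo_subset_Icc_self).stronglyMeasurableAtFilter isOpen_Ioo x hx)
      (hη.continuousAt (Icc_mem_nhds hx.1 hx.2))).hasDerivWithinAt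
  have hsubst := integral_comp_mul_deriv''
    (continuousOn_primitive_interval' hint left_mem_uIcc) hderiv hη
    (continuousOn_pow n)
  simp only [Function.comp_def, integral_same, integral_pow, zero_pow n.succ_ne_zero,
    sub_zero] at hsubst
  simpa only [mul_comm (η _)] using hsubst

section

variable {q : ℝ → ℝ}

theorem continuousOn_etaFun (hq : IntervalIntegrable q volume 0 1) :
    ContinuousOn (etaFun q) (uIcc 0 1) :=
  Real.continuous_exp.comp_continuousOn (continuousOn_primitive_interval' hq left_mem_uIcc)

theorem continuousOn_phiFun (hq : IntervalIntegrable q volume 0 1) :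
    ContinuousOn (phiFun q) (uIcc 0 1) :=
  continuousOn_primitive_interval' (continuousOn_etaFun hq).intervalIntegrable left_mem_uIcc

theorem integral_etaFun_mul_phiFun_pow (hq : IntervalIntegrable q volume 0 1)
    (hη : ∫ x in (0:ℝ)..1, etaFun q x = 1) (n : ℕ) :
    ∫ x in (0:ℝ)..1, etaFun q x * phiFun q x ^ n = 1 / (n + 1) := by
  unfold phiFun
  rw [integral_mul_primitive_pow (continuousOn_etaFun hq), hη, one_pow]

theorem integral_projQ_mul_phiFun_pow (hq : IntervalIntegrable q volume 0 1)
    (hη : ∫ x in (0:ℝ)..1, etaFun q x = 1) {f : ℝ → ℝ} (hf : IntervalIntegrable f volume 0 1)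
    (k : ℕ) :
    ∫ x in (0:ℝ)..1, projQ q f x * phiFun q x ^ k =
      (∫ x in (0:ℝ)..1, f x * phiFun q x ^ k)
        - (4 * (∫ y in (0:ℝ)..1, f y) - 6 * (∫ y in (0:ℝ)..1, f y * phiFun q y)) / (k + 1)
        - (-6 * (∫ y in (0:ℝ)..1, f y) + 12 * (∫ y in (0:ℝ)..1, f y * phiFun q y)) / (k + 2) := by
  set c₁ := 4 * (∫ y in (0:ℝ)..1, f y) - 6 * (∫ y in (0:ℝ)..1, f y * phiFun q y)
  set c₂ := -6 * (∫ y in (0:ℝ)..1, f y) + 12 * (∫ y in (0:ℝ)..1, f y * phiFun q y)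
  have hmoment (n : ℕ) : IntervalIntegrable (fun x => etaFun q x * phiFun q x ^ n) volume 0 1 :=
    ((continuousOn_etaFun hq).mul ((continuousOn_phiFun hq).pow n)).intervalIntegrable
  have hexpand : ∀ x ∈ uIcc (0:ℝ) 1, projQ q f x * phiFun q x ^ k =
      f x * phiFun q x ^ k - c₁ * (etaFun q x * phiFun q x ^ k)
        - c₂ * (etaFun q x * phiFun q x ^ (k + 1)) := fun x _ => by
    simp only [projQ]; ring
  have hfφ : IntervalIntegrable (fun x => f x * phiFun q x ^ k) volume 0 1 :=
    hf.mul_continuousOn ((continuousOn_phiFun hq).pow k)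
  rw [integral_congr hexpand,
    integral_sub (hfφ.sub ((hmoment k).const_mul c₁)) ((hmoment (k + 1)).const_mul c₂),
    integral_sub hfφ ((hmoment k).const_mul c₁),
    intervalIntegral.integral_const_mul, intervalIntegral.integral_const_mul,
    integral_etaFun_mul_phiFun_pow hq hη, integral_etaFun_mul_phiFun_pow hq hη]
  push_cast
  ring

theorem integral_sub_projQ_mul_div_etaFun (hq : IntervalIntegrable q volume 0 1)
    {f X : ℝ → ℝ} (hX : IntervalIntegrable X volume 0 1) :
    ∫ x in (0:ℝ)..1, (f x - projQ q f x) * X x / etaFun q x =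
      (4 * (∫ y in (0:ℝ)..1, f y) - 6 * (∫ y in (0:ℝ)..1, f y * phiFun q y))
          * (∫ x in (0:ℝ)..1, X x)
        + (-6 * (∫ y in (0:ℝ)..1, f y) + 12 * (∫ y in (0:ℝ)..1, f y * phiFun q y))
          * (∫ x in (0:ℝ)..1, X x * phiFun q x) := by
  set c₁ := 4 * (∫ y in (0:ℝ)..1, f y) - 6 * (∫ y in (0:ℝ)..1, f y * phiFun q y)
  set c₂ := -6 * (∫ y in (0:ℝ)..1, f y) + 12 * (∫ y in (0:ℝ)..1, f y * phiFun q y)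
  have hexpand : ∀ x ∈ uIcc (0:ℝ) 1,
      (f x - projQ q f x) * X x / etaFun q x = c₁ * X x + c₂ * (X x * phiFun q x) :=
    fun x _ => by
      have hη : etaFun q x ≠ 0 := (Real.exp_pos _).ne'
      simp only [projQ]
      field_simp
      ring
  rw [integral_congr hexpand,
    integral_add (hX.const_mul c₁) ((hX.mul_continuousOn (continuousOn_phiFun hq)).const_mul c₂),
    intervalIntegral.integral_const_mul, intervalIntegral.integral_const_mul]

end

theorem stmt_7_general (q : ℝ → ℝ) (hq : MeasureTheory.MemLp q 2 mu01)
    (h2 : (∫ x in (0:ℝ)..1, etaFun q x) = 1) :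
    -- (i) the Gram matrix of (η, φη) for ⟨·,·⟩_{1/η} is H₂ = [[1,1/2],[1/2,1/3]]
    ((∫ x in (0:ℝ)..1, etaFun q x * phiFun q x) = 1 / 2 ∧
     (∫ x in (0:ℝ)..1, etaFun q x * (phiFun q x) ^ 2) = 1 / 3) ∧
    -- (ii) π_q is the orthogonal projection onto T_q for ⟨·,·⟩_{1/η}
    (∀ f : ℝ → ℝ, MeasureTheory.MemLp f 2 mu01 →
      ((∫ x in (0:ℝ)..1, projQ q f x) = 0 ∧
       (∫ x in (0:ℝ)..1, projQ q f x * phiFun q x) = 0) ∧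
      (∀ X : ℝ → ℝ, MeasureTheory.MemLp X 2 mu01 →
        (∫ x in (0:ℝ)..1, X x) = 0 → (∫ x in (0:ℝ)..1, X x * phiFun q x) = 0 →
        (∫ x in (0:ℝ)..1, (f x - projQ q f x) * X x / etaFun q x) = 0)) := by
  have hq' := hq.intervalIntegrable_zero_one one_le_two
  refine ⟨⟨?_, ?_⟩, fun f hf => ⟨⟨?_, ?_⟩, fun X hX hX₀ hX₁ => ?_⟩⟩
  · have h := integral_etaFun_mul_phiFun_pow hq' h2 1
    norm_num at h ⊢
    exact h
  · norm_num [integral_etaFun_mul_phiFun_pow hq' h2 2]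
  · have h := integral_projQ_mul_phiFun_pow hq' h2 (hf.intervalIntegrable_zero_one one_le_two) 0
    simp only [pow_zero, mul_one] at h
    rw [h]; ring
  · have h := integral_projQ_mul_phiFun_pow hq' h2 (hf.intervalIntegrable_zero_one one_le_two) 1
    simp only [pow_one] at h
    rw [h]; ring
  · rw [integral_sub_projQ_mul_div_etaFun hq' (hX.intervalIntegrable_zero_one one_le_two), hX₀,
      hX₁]
    ring

/-- for `q ∈ L²([0,1])` with `∫₀¹ q = 0` and `∫₀¹ η(q) = 1`:
(i) `∫₀¹ η φ = 1/2` and `∫₀¹ η φ² = 1/3` (so the Gram matrix of `(η, φη)` for `⟨·,·⟩_{1/η}`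
is the Hilbert matrix `H₂`); (ii) `π_q` is the `⟨·,·⟩_{1/η}`-orthogonal projection of
`L²([0,1])` onto `T_q = {X : ∫₀¹ X = 0, ∫₀¹ X φ = 0}`. -/
theorem stmt_7 (q : ℝ → ℝ) (hq : MeasureTheory.MemLp q 2 mu01)
    (h1 : (∫ x in (0:ℝ)..1, q x) = 0)
    (h2 : (∫ x in (0:ℝ)..1, etaFun q x) = 1) :
    -- (i) the Gram matrix of (η, φη) for ⟨·,·⟩_{1/η} is H₂ = [[1,1/2],[1/2,1/3]]
    ((∫ x in (0:ℝ)..1, etaFun q x * phiFun q x) = 1 / 2 ∧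
     (∫ x in (0:ℝ)..1, etaFun q x * (phiFun q x) ^ 2) = 1 / 3) ∧
    -- (ii) π_q is the orthogonal projection onto T_q for ⟨·,·⟩_{1/η}
    (∀ f : ℝ → ℝ, MeasureTheory.MemLp f 2 mu01 →
      ((∫ x in (0:ℝ)..1, projQ q f x) = 0 ∧
       (∫ x in (0:ℝ)..1, projQ q f x * phiFun q x) = 0) ∧
      (∀ X : ℝ → ℝ, MeasureTheory.MemLp X 2 mu01 →
        (∫ x in (0:ℝ)..1, X x) = 0 → (∫ x in (0:ℝ)..1, X x * phiFun q x) = 0 →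
        (∫ x in (0:ℝ)..1, (f x - projQ q f x) * X x / etaFun q x) = 0)) :=
  stmt_7_general q hq h2
end

section
/- Let μ and ν be finite positive measures on D = [0,1]×[0,1] such that for every nonnegative C^∞ function f : ℝ² → ℝ one has (∫_D ∂ₜf dμ)² ≤ 4 (∫_D f dν)(∫_D f dμ). Let ρ : ℝ² → [0,∞) be a C^∞ function with compact support, and define the smooth functions (ρ ⋆ μ)(z) = ∫_D ρ(z − w) dμ(w) and (ρ ⋆ ν)(z) = ∫_D ρ(z − w) dν(w) for z ∈ ℝ². Then for every z ∈ ℝ², (∂ₜ(ρ ⋆ μ)(z))² ≤ 4 (ρ ⋆ ν)(z) · (ρ ⋆ μ)(z). -/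
open Set MeasureTheory

/-- The square `D = [0,1] × [0,1]` (time × space). -/
def Dsq : Set (ℝ × ℝ) := Icc (0:ℝ) 1 ×ˢ Icc (0:ℝ) 1

/-- if finite positive measures `μ, ν` on `D` satisfy the weak inequality
`(∫_D ∂ₜf dμ)² ≤ 4 (∫_D f dν)(∫_D f dμ)` for all nonnegative smooth `f`, then for any smooth
nonnegative compactly supported kernel `ρ`, the mollified densities satisfy
`(∂ₜ(ρ⋆μ))² ≤ 4 (ρ⋆ν)(ρ⋆μ)` pointwise. -/
theorem stmt_9 (μ ν : MeasureTheory.Measure (ℝ × ℝ))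
    [MeasureTheory.IsFiniteMeasure μ] [MeasureTheory.IsFiniteMeasure ν]
    (hμD : μ Dsqᶜ = 0) (hνD : ν Dsqᶜ = 0)
    (hineq : ∀ f : ℝ × ℝ → ℝ, ContDiff ℝ (⊤ : ℕ∞) f → (∀ z, 0 ≤ f z) →
      (∫ z in Dsq, fderiv ℝ f z (1, 0) ∂μ) ^ 2 ≤
        4 * (∫ z in Dsq, f z ∂ν) * (∫ z in Dsq, f z ∂μ))
    (ρ : ℝ × ℝ → ℝ) (hρ : ContDiff ℝ (⊤ : ℕ∞) ρ) (hρc : HasCompactSupport ρ)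
    (hρpos : ∀ z, 0 ≤ ρ z) :
    ∀ z : ℝ × ℝ,
      (fderiv ℝ (fun z' => ∫ w in Dsq, ρ (z' - w) ∂μ) z (1, 0)) ^ 2 ≤
        4 * (∫ w in Dsq, ρ (z - w) ∂ν) * (∫ w in Dsq, ρ (z - w) ∂μ) := by
  intro z
  have hρcont : Continuous ρ := hρ.continuous
  have hρ'cont : Continuous (fderiv ℝ ρ) := hρ.continuous_fderiv (by simp)
  obtain ⟨C, hC⟩ := (hρc.fderiv ℝ).exists_bound_of_continuous hρ'cont
  -- pointwise derivative of the translated kernel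
  have hder : ∀ (x w : ℝ × ℝ), HasFDerivAt (fun x' => ρ (x' - w)) (fderiv ℝ ρ (x - w)) x := by
    intro x w
    simpa [Function.comp_def] using ((hρ.differentiable (by simp)) (x - w)).hasFDerivAt.comp x
      ((hasFDerivAt_id x).sub_const w)
  -- integrability facts (finite measure, continuous bounded integrands)
  have hint : Integrable (fun w => fderiv ℝ ρ (z - w)) (μ.restrict Dsq) := by
    refine (integrable_const C).mono' ?_ ?_
    · exact (hρ'cont.comp (continuous_const.sub continuous_id)).aestronglyMeasurable
    · exact Filter.Eventually.of_forall fun w => hC _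
  -- differentiation under the integral sign
  have key : HasFDerivAt (fun z' => ∫ w in Dsq, ρ (z' - w) ∂μ)
      (∫ w in Dsq, fderiv ℝ ρ (z - w) ∂μ) z := by
    apply hasFDerivAt_integral_of_dominated_of_fderiv_le
      (F' := fun x w => fderiv ℝ ρ (x - w)) (bound := fun _ => C) (Metric.ball_mem_nhds z zero_lt_one)
    · exact Filter.Eventually.of_forall fun x =>
        (hρcont.comp (continuous_const.sub continuous_id)).aestronglyMeasurable
    · obtain ⟨M, hM⟩ := hρc.exists_bound_of_continuous hρcont
      refine (integrable_const M).mono' ?_ (Filter.Eventually.of_forall fun w => ?_)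
      · exact (hρcont.comp (continuous_const.sub continuous_id)).aestronglyMeasurable
      · exact hM _
    · exact hint.aestronglyMeasurable
    · exact Filter.Eventually.of_forall fun w x _ => hC _
    · exact integrable_const C
    · exact Filter.Eventually.of_forall fun w x _ => hder x w
  rw [key.fderiv]
  have happ : (∫ w in Dsq, fderiv ℝ ρ (z - w) ∂μ) (1, 0)
      = ∫ w in Dsq, fderiv ℝ ρ (z - w) (1, 0) ∂μ :=
    ContinuousLinearMap.integral_apply hint _
  rw [happ]
  -- apply the hypothesis to f := fun w => ρ (z - w)
  have hfsm : ContDiff ℝ (⊤ : ℕ∞) (fun w => ρ (z - w)) :=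
    hρ.comp (contDiff_const.sub contDiff_id)
  have h := hineq (fun w => ρ (z - w)) hfsm (fun w => hρpos _)
  have hfder : ∀ w, fderiv ℝ (fun w' => ρ (z - w')) w (1, 0)
      = -(fderiv ℝ ρ (z - w) (1, 0)) := by
    intro w
    have h1 : HasFDerivAt (fun w' : ℝ × ℝ => z - w')
        (-(ContinuousLinearMap.id ℝ (ℝ × ℝ))) w :=
      (hasFDerivAt_id w).const_sub z
    have h2 : HasFDerivAt (fun w' => ρ (z - w'))
        ((fderiv ℝ ρ (z - w)).comp (-(ContinuousLinearMap.id ℝ (ℝ × ℝ)))) w :=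
      ((hρ.differentiable (by simp)) (z - w)).hasFDerivAt.comp w h1
    rw [h2.fderiv]
    simp
  have hneg : (∫ w in Dsq, fderiv ℝ (fun w' => ρ (z - w')) w (1, 0) ∂μ)
      = -∫ w in Dsq, fderiv ℝ ρ (z - w) (1, 0) ∂μ := by
    rw [← integral_neg]
    exact integral_congr_ae (Filter.Eventually.of_forall fun w => hfder w)
  rw [hneg] at h
  simpa using h
end

section
/- Let μ : D → [0,∞) be continuous and differentiable in the t-variable with ∂ₜμ continuous on D, and let ν : D → [0,∞) be continuous. Assume the pointwise inequality (∂ₜμ(t,x))² ≤ 4 ν(t,x) μ(t,x) for all (t,x) ∈ D. Then for every nonnegative function f : D → ℝ that is continuous, differentiable in t with ∂ₜf continuous, and satisfies f(0,x) = f(1,x) = 0 for all x ∈ [0,1], one has (∫_D μ ∂ₜf dt dx)² ≤ 4 (∫_D ν f dt dx)(∫_D μ f dt dx). -/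
/-!
Integrating by parts in `t` on each slice `x = const` (where `f` vanishes at both ends) turns
`∫ μ ∂ₜf` into `-∫ ∂ₜμ f`. The pointwise bound `(∂ₜμ)² ≤ 4νμ` makes
`s ↦ ν f s² + ∂ₜμ f s + μ f` a nonnegative quadratic at every point; integrating, so is
`s ↦ (∫ ν f) s² + (∫ ∂ₜμ f) s + ∫ μ f`, and its discriminant is nonpositive.
-/

open Set MeasureTheory

theorem quadratic_nonneg_of_sq_le_four_mul {p q r : ℝ} (hp : 0 ≤ p) (hr : 0 ≤ r)
    (h : q ^ 2 ≤ 4 * p * r) (s : ℝ) : 0 ≤ p * (s * s) + q * s + r := by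
  rcases hp.eq_or_lt with rfl | hp
  · nlinarith
  · nlinarith [sq_nonneg (2 * p * s + q)]

theorem sq_integral_le_four_mul_integral_mul_integral {α : Type*} [MeasurableSpace α]
    {ρ : Measure α} {P Q R : α → ℝ} (hP : Integrable P ρ) (hQ : Integrable Q ρ)
    (hR : Integrable R ρ) (hP0 : 0 ≤ᵐ[ρ] P) (hR0 : 0 ≤ᵐ[ρ] R)
    (hQ2 : ∀ᵐ x ∂ρ, Q x ^ 2 ≤ 4 * P x * R x) :
    (∫ x, Q x ∂ρ) ^ 2 ≤ 4 * (∫ x, P x ∂ρ) * (∫ x, R x ∂ρ) := by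
  have hquad : ∀ s : ℝ,
      0 ≤ (∫ x, P x ∂ρ) * (s * s) + (∫ x, Q x ∂ρ) * s + ∫ x, R x ∂ρ := by
    intro s
    have hsplit : ∫ x, P x * (s * s) + Q x * s + R x ∂ρ =
        (∫ x, P x ∂ρ) * (s * s) + (∫ x, Q x ∂ρ) * s + ∫ x, R x ∂ρ := by
      rw [integral_add (f := fun x => P x * (s * s) + Q x * s)
          ((hP.mul_const _).add (hQ.mul_const _)) hR,
        integral_add (hP.mul_const _) (hQ.mul_const _), integral_mul_const, integral_mul_const]
    rw [← hsplit]
    refine integral_nonneg_of_ae ?_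
    filter_upwards [hP0, hR0, hQ2] with x hPx hRx hQx
    exact quadratic_nonneg_of_sq_le_four_mul hPx hRx hQx s
  have := discrim_le_zero hquad
  rw [discrim] at this
  linarith

theorem integral_Icc_deriv_mul_add_mul_deriv_eq_zero {a b : ℝ} (hab : a ≤ b)
    {u u' v v' : ℝ → ℝ} (hu : ∀ t ∈ Icc a b, HasDerivWithinAt u (u' t) (Icc a b) t)
    (hv : ∀ t ∈ Icc a b, HasDerivWithinAt v (v' t) (Icc a b) t)
    (hu' : IntervalIntegrable u' volume a b) (hv' : IntervalIntegrable v' volume a b)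
    (hva : v a = 0) (hvb : v b = 0) :
    ∫ t in Icc a b, u' t * v t + u t * v' t = 0 := by
  rw [integral_Icc_eq_integral_Ioc, ← intervalIntegral.integral_of_le hab,
    intervalIntegral.integral_deriv_mul_eq_sub_of_hasDerivWithinAt (by rwa [uIcc_of_le hab])
      (by rwa [uIcc_of_le hab]) hu' hv', hva, hvb]
  ring

theorem setIntegral_prod_eq_zero_of_forall_slice {α β E : Type*} [MeasurableSpace α]
    [MeasurableSpace β] [NormedAddCommGroup E] [NormedSpace ℝ E] {μ : Measure α}
    {ν : Measure β} [SFinite μ] [SFinite ν] {s : Set α} {t : Set β} {F : α × β → E}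
    (hF : IntegrableOn F (s ×ˢ t) (μ.prod ν)) (h : ∀ y ∈ t, ∫ x in s, F (x, y) ∂μ = 0) :
    ∫ z in s ×ˢ t, F z ∂μ.prod ν = 0 := by
  rw [IntegrableOn, ← Measure.prod_restrict] at hF
  rw [← Measure.prod_restrict, integral_prod_symm F hF]
  exact setIntegral_eq_zero_of_forall_eq_zero h

theorem setIntegral_Icc_prod_mul_deriv_eq_neg {a b : ℝ} (hab : a ≤ b) {K : Set ℝ}
    (hK : IsCompact K) {u u' v v' : ℝ × ℝ → ℝ}
    (hu : ContinuousOn u (Icc a b ×ˢ K)) (hu' : ContinuousOn u' (Icc a b ×ˢ K))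
    (hv : ContinuousOn v (Icc a b ×ˢ K)) (hv' : ContinuousOn v' (Icc a b ×ˢ K))
    (huu' : ∀ z ∈ Icc a b ×ˢ K, HasDerivWithinAt (fun t => u (t, z.2)) (u' z) (Icc a b) z.1)
    (hvv' : ∀ z ∈ Icc a b ×ˢ K, HasDerivWithinAt (fun t => v (t, z.2)) (v' z) (Icc a b) z.1)
    (hva : ∀ x ∈ K, v (a, x) = 0) (hvb : ∀ x ∈ K, v (b, x) = 0) :
    ∫ z in Icc a b ×ˢ K, u z * v' z = -∫ z in Icc a b ×ˢ K, u' z * v z := by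
  have hR : IsCompact (Icc a b ×ˢ K) := isCompact_Icc.prod hK
  have huv' : IntegrableOn (fun z => u z * v' z) (Icc a b ×ˢ K) :=
    (hu.mul hv').integrableOn_compact hR
  have hu'v : IntegrableOn (fun z => u' z * v z) (Icc a b ×ˢ K) :=
    (hu'.mul hv).integrableOn_compact hR
  have hsum : ∫ z in Icc a b ×ˢ K, u' z * v z + u z * v' z = 0 := by
    rw [Measure.volume_eq_prod]
    refine setIntegral_prod_eq_zero_of_forall_slice (hu'v.add huv') fun x hx => ?_
    have hslice : ∀ w : ℝ × ℝ → ℝ, ContinuousOn w (Icc a b ×ˢ K) →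
        IntervalIntegrable (fun t => w (t, x)) volume a b := fun w hw =>
      (hw.comp (by fun_prop) fun t ht => mk_mem_prod ht hx).intervalIntegrable_of_Icc hab
    exact integral_Icc_deriv_mul_add_mul_deriv_eq_zero hab
      (fun t ht => huu' (t, x) (mk_mem_prod ht hx)) (fun t ht => hvv' (t, x) (mk_mem_prod ht hx))
      (hslice u' hu') (hslice v' hv') (hva x hx) (hvb x hx)
  rw [integral_add hu'v huv'] at hsum
  linarith

/-- if `μ, ν ≥ 0` are continuous on `D`, `μ` is differentiable in `t` with
continuous `∂ₜμ`, and `(∂ₜμ)² ≤ 4νμ` pointwise on `D`, then for every nonnegative test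
function `f` (continuous, `C¹` in `t`, vanishing at `t = 0` and `t = 1`) one has
`(∫_D μ ∂ₜf)² ≤ 4 (∫_D ν f)(∫_D μ f)`. -/
theorem stmt_11 (μ ν dtμ : ℝ × ℝ → ℝ)
    (hμc : ContinuousOn μ Dsq) (hνc : ContinuousOn ν Dsq) (hdtμc : ContinuousOn dtμ Dsq)
    (hμ0 : ∀ z ∈ Dsq, 0 ≤ μ z) (hν0 : ∀ z ∈ Dsq, 0 ≤ ν z)
    (hμdiff : ∀ z ∈ Dsq, HasDerivWithinAt (fun t => μ (t, z.2)) (dtμ z) (Icc (0:ℝ) 1) z.1)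
    (hpoint : ∀ z ∈ Dsq, (dtμ z) ^ 2 ≤ 4 * ν z * μ z) :
    ∀ f dtf : ℝ × ℝ → ℝ,
      ContinuousOn f Dsq → ContinuousOn dtf Dsq →
      (∀ z ∈ Dsq, 0 ≤ f z) →
      (∀ z ∈ Dsq, HasDerivWithinAt (fun t => f (t, z.2)) (dtf z) (Icc (0:ℝ) 1) z.1) →
      (∀ x ∈ Icc (0:ℝ) 1, f (0, x) = 0) → (∀ x ∈ Icc (0:ℝ) 1, f (1, x) = 0) →
      (∫ z in Dsq, μ z * dtf z) ^ 2 ≤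
        4 * (∫ z in Dsq, ν z * f z) * (∫ z in Dsq, μ z * f z) := by
  intro f dtf hfc hdtfc hf0 hfdiff hf_t0 hf_t1
  have hD : IsCompact Dsq := isCompact_Icc.prod isCompact_Icc
  have hibp : ∫ z in Dsq, μ z * dtf z = -∫ z in Dsq, dtμ z * f z :=
    setIntegral_Icc_prod_mul_deriv_eq_neg zero_le_one isCompact_Icc hμc hdtμc hfc hdtfc
      hμdiff hfdiff hf_t0 hf_t1
  rw [hibp, neg_sq]
  refine sq_integral_le_four_mul_integral_mul_integral ((hνc.mul hfc).integrableOn_compact hD)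
    ((hdtμc.mul hfc).integrableOn_compact hD) ((hμc.mul hfc).integrableOn_compact hD)
    ?_ ?_ ?_ <;> refine ae_restrict_of_forall_mem hD.measurableSet fun z hz => ?_
  · exact mul_nonneg (hν0 z hz) (hf0 z hz)
  · exact mul_nonneg (hμ0 z hz) (hf0 z hz)
  · calc (dtμ z * f z) ^ 2 = dtμ z ^ 2 * f z ^ 2 := by ring
      _ ≤ 4 * ν z * μ z * f z ^ 2 := mul_le_mul_of_nonneg_right (hpoint z hz) (sq_nonneg _)
      _ = 4 * (ν z * f z) * (μ z * f z) := by ring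
end

section
/- Let g : [0,1] → L²([0,1]) be a continuously differentiable curve, and set μ(t) = g(t)² (the pointwise square of the function g(t) ∈ L²([0,1])), so μ(t) ∈ L¹([0,1]). Then for all s,t ∈ [0,1]: ‖μ(t) − μ(s)‖_{L¹([0,1])} ≤ 2 · (sup_{τ∈[0,1]} ‖g(τ)‖_{L²}) · |t−s|^{1/2} · (∫₀¹ ‖g'(τ)‖²_{L²} dτ)^{1/2}. In particular t ↦ μ(t) is Hölder continuous with exponent 1/2 as a map into L¹([0,1]). -/
/-!
Factor `g(t)² - g(s)² = (g(t) - g(s)) (g(t) + g(s))`: Cauchy–Schwarz in `L²` bounds the `L¹`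
distance by `‖g(t) - g(s)‖ · 2 sup ‖g‖`. By the fundamental theorem of calculus and
Cauchy–Schwarz in time, `‖g(t) - g(s)‖ ≤ ∫ₛᵗ ‖g'‖ ≤ |t - s|^{1/2} (∫₀¹ ‖g'‖²)^{1/2}`.
-/

open Set MeasureTheory intervalIntegral

section

variable {α : Type*} [MeasurableSpace α] {μ : Measure α}

theorem integral_abs_mul_le_norm_mul_norm (f h : Lp ℝ 2 μ) :
    ∫ x, |f x * h x| ∂μ ≤ ‖f‖ * ‖h‖ :=
  calc ∫ x, |f x * h x| ∂μ = inner ℝ |f| |h| := by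
        rw [L2.inner_def]
        refine integral_congr_ae ?_
        filter_upwards [Lp.coeFn_abs f, Lp.coeFn_abs h] with x hf hh
        simp [hf, hh, abs_mul, mul_comm]
    _ ≤ ‖|f|‖ * ‖|h|‖ := real_inner_le_norm _ _
    _ = ‖f‖ * ‖h‖ := by rw [norm_abs_eq_norm, norm_abs_eq_norm]

theorem integral_abs_sq_sub_sq_le (f h : Lp ℝ 2 μ) :
    ∫ x, |f x ^ 2 - h x ^ 2| ∂μ ≤ ‖f - h‖ * ‖f + h‖ := by
  refine le_of_eq_of_le (integral_congr_ae ?_) (integral_abs_mul_le_norm_mul_norm _ _)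
  filter_upwards [Lp.coeFn_sub f h, Lp.coeFn_add f h] with x hsub hadd
  rw [hsub, hadd, Pi.sub_apply, Pi.add_apply, sq_sub_sq, mul_comm]

theorem integral_norm_le_sqrt_measureReal_mul_sqrt {E : Type*} [NormedAddCommGroup E]
    [IsFiniteMeasure μ] {f : α → E} (hf : MemLp f 2 μ) :
    ∫ x, ‖f x‖ ∂μ ≤ √(μ.real univ) * √(∫ x, ‖f x‖ ^ 2 ∂μ) := by
  have key := integral_mul_norm_le_Lp_mul_Lq (μ := μ) .two_two
    (memLp_const (1 : ℝ)) (by simpa using hf.norm)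
  simp only [norm_one, one_mul, norm_norm, Real.rpow_two, one_pow, MeasureTheory.integral_const,
    smul_eq_mul, mul_one] at key
  simpa only [Real.sqrt_eq_rpow, one_div] using key

end

theorem norm_sub_le_sqrt_mul_sqrt_integral_norm_deriv_sq {E : Type*} [NormedAddCommGroup E]
    [NormedSpace ℝ E] [CompleteSpace E] {f f' : ℝ → E} {a b : ℝ} (hab : a ≤ b)
    (hf : ∀ x ∈ Icc a b, HasDerivWithinAt f (f' x) (Icc a b) x)
    (hf' : ContinuousOn f' (Icc a b)) :
    ‖f b - f a‖ ≤ √(b - a) * √(∫ x in a..b, ‖f' x‖ ^ 2) := by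
  have hftc : ∫ x in a..b, f' x = f b - f a :=
    integral_eq_sub_of_hasDerivAt_of_le hab (fun x hx => (hf x hx).continuousWithinAt)
      (fun x hx => (hf x (Ioo_subset_Icc_self hx)).hasDerivAt (Icc_mem_nhds hx.1 hx.2))
      (hf'.intervalIntegrable_of_Icc hab)
  have hf'L2 : MemLp f' 2 (volume.restrict (Ioc a b)) :=
    (memLp_two_iff_integrable_sq_norm
      ((hf'.mono Ioc_subset_Icc_self).aestronglyMeasurable measurableSet_Ioc)).2
      ((hf'.norm.pow 2).integrableOn_Icc.mono_set Ioc_subset_Icc_self)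
  calc ‖f b - f a‖ = ‖∫ x in a..b, f' x‖ := by rw [hftc]
    _ ≤ ∫ x in Ioc a b, ‖f' x‖ :=
      (intervalIntegral.norm_integral_le_integral_norm hab).trans_eq (integral_of_le hab)
    _ ≤ √(volume.real (Ioc a b)) * √(∫ x in Ioc a b, ‖f' x‖ ^ 2) := by
      simpa using integral_norm_le_sqrt_measureReal_mul_sqrt hf'L2
    _ = √(b - a) * √(∫ x in a..b, ‖f' x‖ ^ 2) := by
      rw [Real.volume_real_Ioc_of_le hab, integral_of_le hab]

/-- for a `C¹` curve `g : [0,1] → L²([0,1])` and `μ(t) = g(t)²` (pointwise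
square, an element of `L¹([0,1])`), one has for all `s, t ∈ [0,1]`:
`‖μ(t) − μ(s)‖_{L¹} ≤ 2 (sup_τ ‖g(τ)‖_{L²}) |t−s|^{1/2} (∫₀¹ ‖g'(τ)‖²_{L²} dτ)^{1/2}`;
in particular `t ↦ μ(t)` is `1/2`-Hölder into `L¹([0,1])`. -/
theorem stmt_15 (g g' : ℝ → MeasureTheory.Lp ℝ 2 mu01)
    (hderiv : ∀ t ∈ Icc (0:ℝ) 1, HasDerivWithinAt g (g' t) (Icc (0:ℝ) 1) t)
    (hcont : ContinuousOn g' (Icc (0:ℝ) 1)) :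
    ∀ s ∈ Icc (0:ℝ) 1, ∀ t ∈ Icc (0:ℝ) 1,
      (∫ x, |((g t : ℝ → ℝ) x) ^ 2 - ((g s : ℝ → ℝ) x) ^ 2| ∂mu01) ≤
        2 * sSup ((fun τ => ‖g τ‖) '' Icc (0:ℝ) 1) * Real.sqrt |t - s| *
          Real.sqrt (∫ τ in (0:ℝ)..1, ‖g' τ‖ ^ 2) := by
  intro s hs t ht
  wlog hst : s ≤ t generalizing s t
  · simpa only [abs_sub_comm] using this t ht s hs (le_of_not_ge hst)
  set M := sSup ((fun τ => ‖g τ‖) '' Icc (0:ℝ) 1)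
  have hM : ∀ τ ∈ Icc (0:ℝ) 1, ‖g τ‖ ≤ M := fun τ hτ =>
    le_csSup (isCompact_Icc.bddAbove_image fun x hx => (hderiv x hx).continuousWithinAt.norm)
      ⟨τ, hτ, rfl⟩
  have hsub : Icc s t ⊆ Icc (0:ℝ) 1 := Icc_subset_Icc hs.1 ht.2
  have hincr : ‖g t - g s‖ ≤ √|t - s| * √(∫ τ in (0:ℝ)..1, ‖g' τ‖ ^ 2) := by
    rw [abs_of_nonneg (sub_nonneg.2 hst)]
    refine (norm_sub_le_sqrt_mul_sqrt_integral_norm_deriv_sq hst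
      (fun x hx => (hderiv x (hsub hx)).mono hsub) (hcont.mono hsub)).trans ?_
    gcongr
    exact integral_mono_interval hs.1 hst ht.2 (ae_of_all _ fun x => by positivity)
      ((hcont.norm.pow 2).intervalIntegrable_of_Icc zero_le_one)
  calc ∫ x, |g t x ^ 2 - g s x ^ 2| ∂mu01 ≤ ‖g t - g s‖ * ‖g t + g s‖ :=
        integral_abs_sq_sub_sq_le _ _
    _ ≤ (√|t - s| * √(∫ τ in (0:ℝ)..1, ‖g' τ‖ ^ 2)) * (M + M) := by
      gcongr
      exact (norm_add_le _ _).trans (add_le_add (hM t ht) (hM s hs))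
    _ = 2 * M * √|t - s| * √(∫ τ in (0:ℝ)..1, ‖g' τ‖ ^ 2) := by ring
end
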